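/- arXiv:1201.1338 — 6 statements merged into one kernel-verified Lean document; each statement's English description precedes it below -/
import Mathlib

section
/- The subspace H ⊕ ℂC_{LI} ⊕ ℂC_L, where H = (⊕_{n∈ℤ} ℂI_n) ⊕ ℂC_I is the Heisenberg subalgebra, is the unique maximal proper ideal of the twisted Heisenberg-Virasoro algebra 𝔏. -/
/-- Index type for the standard basis of the twisted Heisenberg-Virasoro algebra. -/
inductive HVIx : Type
  | l : ℤ → HVIx
  | i : ℤ → HVIx
  | cl : HVIx
  | ci : HVIx
  | cli : HVIx

/-- A complex Lie algebra `𝔏` equipped with the structure of the twisted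
Heisenberg-Virasoro algebra: a basis `{L_m, I_m, C_L, C_I, C_LI}` with the
defining Lie brackets. -/
structure THV (𝔏 : Type*) [LieRing 𝔏] [LieAlgebra ℂ 𝔏] where
  b : Module.Basis HVIx ℂ 𝔏
  bracket_LL : ∀ m n : ℤ, ⁅b (.l m), b (.l n)⁆ =
    ((n : ℂ) - (m : ℂ)) • b (.l (m + n)) +
      (if m + n = 0 then (((m : ℂ) ^ 3 - (m : ℂ)) / 12) • b .cl else 0)
  bracket_II : ∀ m n : ℤ, ⁅b (.i m), b (.i n)⁆ =
    (if m + n = 0 then (n : ℂ) • b .ci else 0)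
  bracket_LI : ∀ m n : ℤ, ⁅b (.l m), b (.i n)⁆ =
    (n : ℂ) • b (.i (m + n)) +
      (if m + n = 0 then ((m : ℂ) ^ 2 - (m : ℂ)) • b .cli else 0)
  central_CL : ∀ x : 𝔏, ⁅x, b .cl⁆ = 0
  central_CI : ∀ x : 𝔏, ⁅x, b .ci⁆ = 0
  central_CLI : ∀ x : 𝔏, ⁅x, b .cli⁆ = 0

namespace THV

variable {𝔏 : Type*} [LieRing 𝔏] [LieAlgebra ℂ 𝔏] (s : THV 𝔏)

/-- The element `L n`. -/
noncomputable def L (n : ℤ) : 𝔏 := s.b (.l n)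
/-- The element `I n`. -/
noncomputable def I (n : ℤ) : 𝔏 := s.b (.i n)
/-- The central element `C_L`. -/
noncomputable def CL : 𝔏 := s.b .cl
/-- The central element `C_I`. -/
noncomputable def CI : 𝔏 := s.b .ci
/-- The central element `C_LI`. -/
noncomputable def CLI : 𝔏 := s.b .cli

end THV

/-- `θ` is a conjugate-linear anti-involution of the complex Lie algebra `𝔤`. -/
structure IsConjAntiInvol (𝔤 : Type*) [LieRing 𝔤] [LieAlgebra ℂ 𝔤] (θ : 𝔤 → 𝔤) : Prop where
  map_add : ∀ x y : 𝔤, θ (x + y) = θ x + θ y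
  map_smul : ∀ (c : ℂ) (x : 𝔤), θ (c • x) = (starRingEnd ℂ) c • θ x
  map_bracket : ∀ x y : 𝔤, θ ⁅x, y⁆ = ⁅θ y, θ x⁆
  invol : ∀ x : 𝔤, θ (θ x) = x

/-- A `𝔤`-module `V` is unitary with respect to `θ` if there is a positive definite
Hermitian form `⟨·,·⟩` (linear in the first argument) with `⟨x·u, v⟩ = ⟨u, θ(x)·v⟩`. -/
def IsUnitaryWith (𝔤 : Type*) [LieRing 𝔤] [LieAlgebra ℂ 𝔤]
    (V : Type*) [AddCommGroup V] [Module ℂ V] [LieRingModule 𝔤 V]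
    (θ : 𝔤 → 𝔤) : Prop :=
  ∃ B : V → V → ℂ,
    (∀ u v w : V, B (u + v) w = B u w + B v w) ∧
    (∀ (c : ℂ) (u v : V), B (c • u) v = c * B u v) ∧
    (∀ u v : V, B v u = (starRingEnd ℂ) (B u v)) ∧
    (∀ v : V, v ≠ 0 → 0 < (B v v).re) ∧
    (∀ (x : 𝔤) (u v : V), B ⁅x, u⁆ v = B u ⁅θ x, v⁆)

/-!
`ad L₀` acts diagonally on the basis (`L_n` and `I_n` with eigenvalue `n`, the central elements
with `0`), so an ideal containing `x` contains `p(ad L₀) x` for every polynomial `p`, in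
particular the weight-`m` part `y = a L_m + c I_m + z` (`z` central) of `x`. If `a ≠ 0`, then
`⁅L_{1-m}, y⁆ = a(2m-1) L₁ + cm I₁` with `2m - 1 ≠ 0`, and bracketing with `I₁` and `L₋₁` puts
`I₂`, `I₁`, `L₁` and `2L₀ = ⁅L₋₁, L₁⁆` into the ideal. Once `L₀` is in, so is every basis vector
of nonzero weight, and `I₀`, `C_I`, `C_LI`, `C_L` are brackets of those up to multiples of `L₀`.
Hence a proper ideal has no `L`-components: it lies in the span of the other basis vectors,
which is an ideal because `⁅𝔏, I_n⁆` involves only the `I`'s, `C_I` and `C_LI`.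
-/

open Polynomial Submodule

theorem Module.Basis.repr_aeval_apply {ι R M : Type*} [CommRing R] [Nontrivial R]
    [AddCommGroup M] [Module R M] (b : Module.Basis ι R M) {f : Module.End R M} {μ : ι → R}
    (hf : ∀ k, f (b k) = μ k • b k) (p : R[X]) (x : M) (k : ι) :
    b.repr (aeval f p x) k = p.eval (μ k) * b.repr x k := by
  suffices (b.coord k).comp (aeval f p) = p.eval (μ k) • b.coord k from
    LinearMap.congr_fun this x
  refine b.ext fun j => ?_
  have hj : f.HasEigenvector (μ j) (b j) :=
    ⟨Module.End.mem_eigenspace_iff.mpr (hf j), b.ne_zero j⟩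
  simp only [LinearMap.comp_apply,
    Module.End.aeval_apply_of_hasEigenvector hj, LinearMap.map_smul, LinearMap.smul_apply,
    Module.Basis.coord_apply, Module.Basis.repr_self, smul_eq_mul]
  obtain rfl | hjk := eq_or_ne j k
  · rfl
  · simp [Finsupp.single_eq_of_ne hjk.symm]

def HVIx.weight : HVIx → ℤ
  | .l n => n
  | .i n => n
  | _ => 0

namespace THV

variable {𝔏 : Type*} [LieRing 𝔏] [LieAlgebra ℂ 𝔏] (s : THV 𝔏)

lemma lie_L_zero (k : HVIx) : ⁅s.b (.l 0), s.b k⁆ = (k.weight : ℂ) • s.b k := by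
  cases k with
  | l n => simp [s.bracket_LL, HVIx.weight]
  | i n => simp [s.bracket_LI, HVIx.weight]
  | cl => simp [s.central_CL, HVIx.weight]
  | ci => simp [s.central_CI, HVIx.weight]
  | cli => simp [s.central_CLI, HVIx.weight]

lemma exists_mem_span_weight_eq (J : LieIdeal ℂ 𝔏) {x : 𝔏} (hx : x ∈ J) {m : ℤ}
    (hm : s.b.repr x (.l m) ≠ 0) :
    ∃ y ∈ J, y ∈ span ℂ (s.b '' {k | k.weight = m}) ∧ s.b.repr y (.l m) ≠ 0 := by
  set W := ((s.b.repr x).support.image HVIx.weight).erase m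
  set p : ℂ[X] := ∏ w ∈ W, (X - C (w : ℂ))
  have eval_p (n : ℤ) : p.eval (n : ℂ) = 0 ↔ n ∈ W := by
    simp [p, eval_prod, Finset.prod_eq_zero_iff, sub_eq_zero]
  have repr_y := s.b.repr_aeval_apply (f := LieAlgebra.ad ℂ 𝔏 (s.b (.l 0)))
    (fun k => s.lie_L_zero k) p x
  refine ⟨aeval (LieAlgebra.ad ℂ 𝔏 (s.b (.l 0))) p x,
    aeval_apply_smul_mem_of_le_comap (q := (J : Submodule ℂ 𝔏)) hx p _
      fun z hz => J.lie_mem hz, ?_, ?_⟩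
  · rw [Module.Basis.mem_span_image]
    intro k hk
    simp only [Finset.mem_coe, Finsupp.mem_support_iff, repr_y, ne_eq, mul_eq_zero,
      not_or, eval_p] at hk
    by_contra hkm
    exact hk.1 (Finset.mem_erase.mpr ⟨hkm, Finset.mem_image_of_mem _ (by simpa using hk.2)⟩)
  · simp [repr_y, eval_p, W, hm, HVIx.weight]

lemma lie_L_one_sub_eq {m : ℤ} {y : 𝔏} (hy : y ∈ span ℂ (s.b '' {k | k.weight = m})) :
    ⁅s.b (.l (1 - m)), y⁆ = (s.b.repr y (.l m) * (2 * m - 1)) • s.b (.l 1) +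
      (s.b.repr y (.i m) * m) • s.b (.i 1) := by
  let rhs : 𝔏 →ₗ[ℂ] 𝔏 :=
    ((2 * m - 1 : ℂ) • (s.b.coord (.l m))).smulRight (s.b (.l 1)) +
      ((m : ℂ) • s.b.coord (.i m)).smulRight (s.b (.i 1))
  suffices Set.EqOn (LieAlgebra.ad ℂ 𝔏 (s.b (.l (1 - m)))) rhs (s.b '' {k | k.weight = m}) by
    simpa [rhs, mul_smul, mul_comm] using LinearMap.eqOn_span' this hy
  rintro _ ⟨k, hk, rfl⟩
  cases k with
  | l n =>
    obtain rfl : n = m := hk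
    simp [rhs, s.bracket_LL, show (n : ℂ) - (1 - n) = 2 * n - 1 by ring]
  | i n =>
    obtain rfl : n = m := hk
    simp [rhs, s.bracket_LI]
  | cl => simp [rhs, s.central_CL]
  | ci => simp [rhs, s.central_CI]
  | cli => simp [rhs, s.central_CLI]

variable {s} {J : LieIdeal ℂ 𝔏}

lemma eq_top_of_L_zero_mem (hL₀ : s.b (.l 0) ∈ J) : J = ⊤ := by
  have weight_ne_zero {k : HVIx} (hk : k.weight ≠ 0) : s.b k ∈ J :=
    (J.toSubmodule.smul_mem_iff (Int.cast_ne_zero.mpr hk : (k.weight : ℂ) ≠ 0)).mp <| by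
      simpa only [s.lie_L_zero, LieSubmodule.mem_toSubmodule] using
        lie_mem_left ℂ 𝔏 J _ (s.b k) hL₀
  -- `⁅L₁, I₋₁⁆ = -I₀`, `⁅I₁, I₋₁⁆ = -C_I`, `⁅L₋₁, I₁⁆ = I₀ + 2C_LI`, `⁅L₂, L₋₂⁆ = -4L₀ + C_L/2`
  have hI₀ : s.b (.i 0) ∈ J := by
    have h := J.lie_mem (x := s.b (.l 1)) (weight_ne_zero (k := .i (-1)) (by decide))
    norm_num [s.bracket_LI] at h
    exact h
  have hCI : s.b .ci ∈ J := by
    have h := J.lie_mem (x := s.b (.i 1)) (weight_ne_zero (k := .i (-1)) (by decide))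
    norm_num [s.bracket_II] at h
    exact h
  have hCLI : s.b .cli ∈ J := by
    have h := J.lie_mem (x := s.b (.l (-1))) (weight_ne_zero (k := .i 1) (by decide))
    norm_num [s.bracket_LI] at h
    exact (J.toSubmodule.smul_mem_iff two_ne_zero).mp ((add_mem_cancel_left hI₀).mp h)
  have hCL : s.b .cl ∈ J := by
    have h := J.lie_mem (x := s.b (.l 2)) (weight_ne_zero (k := .l (-2)) (by decide))
    norm_num [s.bracket_LL] at h
    exact (J.toSubmodule.smul_mem_iff (by norm_num : (1 / 2 : ℂ) ≠ 0)).mp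
      ((add_mem_cancel_left (neg_mem (SMulMemClass.smul_mem (4 : ℂ) hL₀))).mp h)
  rw [← LieSubmodule.toSubmodule_eq_top, eq_top_iff, ← s.b.span_eq, span_le]
  rintro _ ⟨k, rfl⟩
  cases k with
  | l n => rcases eq_or_ne n 0 with rfl | hn; exacts [hL₀, weight_ne_zero hn]
  | i n => rcases eq_or_ne n 0 with rfl | hn; exacts [hI₀, weight_ne_zero hn]
  | cl => exact hCL
  | ci => exact hCI
  | cli => exact hCLI

lemma L_zero_mem_of_smul_add_smul_mem {a c : ℂ} (ha : a ≠ 0)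
    (hu : a • s.b (.l 1) + c • s.b (.i 1) ∈ J) : s.b (.l 0) ∈ J := by
  -- `⁅I₁, aL₁ + cI₁⁆ = -aI₂`, `⁅L₋₁, I₂⁆ = 2I₁`, `⁅L₋₁, L₁⁆ = 2L₀`
  have hI₂ : s.b (.i 2) ∈ J := by
    have h := J.lie_mem (x := s.b (.i 1)) hu
    rw [← lie_skew] at h
    norm_num [s.bracket_LI, s.bracket_II] at h
    exact (J.toSubmodule.smul_mem_iff ha).mp h
  have hI₁ : s.b (.i 1) ∈ J := by
    have h := J.lie_mem (x := s.b (.l (-1))) hI₂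
    norm_num [s.bracket_LI] at h
    exact h
  have hL₁ : s.b (.l 1) ∈ J :=
    (J.toSubmodule.smul_mem_iff ha).mp ((add_mem_cancel_right (SMulMemClass.smul_mem c hI₁)).mp hu)
  have h := J.lie_mem (x := s.b (.l (-1))) hL₁
  norm_num [s.bracket_LL] at h
  exact h

lemma eq_top_of_repr_L_ne_zero {x : 𝔏} (hx : x ∈ J) {m : ℤ} (hm : s.b.repr x (.l m) ≠ 0) :
    J = ⊤ := by
  obtain ⟨y, hyJ, hy, hym⟩ := s.exists_mem_span_weight_eq J hx hm
  have h2m : (2 * m - 1 : ℂ) ≠ 0 := by exact_mod_cast (by omega : 2 * m - 1 ≠ 0)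
  have hu := s.lie_L_one_sub_eq hy ▸ J.lie_mem (x := s.b (.l (1 - m))) hyJ
  exact eq_top_of_L_zero_mem (L_zero_mem_of_smul_add_smul_mem (mul_ne_zero hym h2m) hu)

variable (s)

lemma lie_b_mem_span_compl_range_l (j : HVIx) {k : HVIx} (hk : k ∉ Set.range HVIx.l) :
    ⁅s.b j, s.b k⁆ ∈ span ℂ (s.b '' (Set.range HVIx.l)ᶜ) := by
  have mem {k : HVIx} (hk : k ∉ Set.range HVIx.l) :
      s.b k ∈ span ℂ (s.b '' (Set.range HVIx.l)ᶜ) :=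
    subset_span ⟨k, hk, rfl⟩
  cases k with
  | l n => exact absurd ⟨n, rfl⟩ hk
  | i n =>
    cases j with
    | l p =>
      rw [s.bracket_LI]
      refine add_mem (smul_mem _ _ (mem (by simp))) ?_
      split_ifs
      exacts [smul_mem _ _ (mem (by simp)), zero_mem _]
    | i p =>
      rw [s.bracket_II]
      split_ifs
      exacts [smul_mem _ _ (mem (by simp)), zero_mem _]
    | cl => rw [← lie_skew, s.central_CL, neg_zero]; exact zero_mem _
    | ci => rw [← lie_skew, s.central_CI, neg_zero]; exact zero_mem _
    | cli => rw [← lie_skew, s.central_CLI, neg_zero]; exact zero_mem _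
  | cl => rw [s.central_CL]; exact zero_mem _
  | ci => rw [s.central_CI]; exact zero_mem _
  | cli => rw [s.central_CLI]; exact zero_mem _

lemma lie_mem_span_compl_range_l (x : 𝔏) {y : 𝔏}
    (hy : y ∈ span ℂ (s.b '' (Set.range HVIx.l)ᶜ)) :
    ⁅x, y⁆ ∈ span ℂ (s.b '' (Set.range HVIx.l)ᶜ) := by
  set P := span ℂ (s.b '' (Set.range HVIx.l)ᶜ)
  have ad_basis_le (j : HVIx) : P ≤ P.comap (LieAlgebra.ad ℂ 𝔏 (s.b j)) :=
    span_le.mpr fun _ ⟨k, hk, hkb⟩ => hkb ▸ s.lie_b_mem_span_compl_range_l j hk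
  have top_le : span ℂ (Set.range s.b) ≤ P.comap (LieAlgebra.ad ℂ 𝔏 y) := by
    refine span_le.mpr ?_
    rintro _ ⟨j, rfl⟩
    rw [SetLike.mem_coe, mem_comap, LieAlgebra.ad_apply, ← lie_skew, neg_mem_iff]
    exact ad_basis_le j hy
  rw [← lie_skew, neg_mem_iff]
  exact top_le (s.b.span_eq ▸ mem_top)

noncomputable def maxIdeal : LieIdeal ℂ 𝔏 where
  toSubmodule := span ℂ (s.b '' (Set.range HVIx.l)ᶜ)
  lie_mem := s.lie_mem_span_compl_range_l _

lemma coe_maxIdeal :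
    (s.maxIdeal : Submodule ℂ 𝔏) = span ℂ (Set.range s.I ∪ {s.CI, s.CLI, s.CL}) := by
  have : (Set.range HVIx.l)ᶜ = Set.range HVIx.i ∪ {.ci, .cli, .cl} := by
    ext k
    cases k <;> simp
  simp only [maxIdeal, this, Set.image_union, Set.image_insert_eq, Set.image_singleton,
    ← Set.range_comp]
  rfl

variable {s}

lemma mem_maxIdeal_iff {x : 𝔏} : x ∈ s.maxIdeal ↔ ∀ n, s.b.repr x (.l n) = 0 := by
  rw [← LieSubmodule.mem_toSubmodule]
  simp [maxIdeal, Module.Basis.mem_span_image, Set.subset_compl_comm, Set.range_subset_iff]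

lemma maxIdeal_ne_top : s.maxIdeal ≠ ⊤ := by
  intro h
  have := mem_maxIdeal_iff.mp (h ▸ LieSubmodule.mem_top (s.b (.l 0))) 0
  rw [Module.Basis.repr_self, Finsupp.single_eq_same] at this
  exact one_ne_zero this

lemma le_maxIdeal_of_ne_top (hJ : J ≠ ⊤) : J ≤ s.maxIdeal := fun _ hx =>
  mem_maxIdeal_iff.mpr fun _ => by_contra fun hm => hJ (eq_top_of_repr_L_ne_zero hx hm)

end THV

/-- `H ⊕ ℂC_LI ⊕ ℂC_L`, where `H = (⊕ₙ ℂI_n) ⊕ ℂC_I` is the Heisenberg subalgebra,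
is the unique maximal proper ideal of the twisted Heisenberg-Virasoro algebra `𝔏`. -/
theorem unique_maximal_ideal (𝔏 : Type*) [LieRing 𝔏] [LieAlgebra ℂ 𝔏] (s : THV 𝔏) :
    ∃ M : LieIdeal ℂ 𝔏,
      (M : Submodule ℂ 𝔏) =
        Submodule.span ℂ (Set.range s.I ∪ {s.CI, s.CLI, s.CL}) ∧
      M ≠ ⊤ ∧
      ∀ J : LieIdeal ℂ 𝔏, J ≠ ⊤ → J ≤ M :=
  ⟨s.maxIdeal, s.coe_maxIdeal, THV.maxIdeal_ne_top, fun _ => THV.le_maxIdeal_of_ne_top⟩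
end

section
/- For any conjugate-linear anti-involution θ of the twisted Heisenberg-Virasoro algebra 𝔏, one has θ(H ⊕ ℂC_{LI}) = H ⊕ ℂC_{LI}, where H = (⊕_{n∈ℤ} ℂI_n) ⊕ ℂC_I is the Heisenberg subalgebra. -/
/-!
The subspace `Q = H ⊕ ℂC_LI ⊕ ℂC_L` is intrinsic: it is exactly the set of `x` with `ad x`
nilpotent. Indeed `ad x` maps `𝔏` into `H ⊕ ℂC_LI` and `Q` into the centre for `x ∈ Q`, so
`(ad x)^3 = 0`; if `x ∉ Q` and `a L_{m₀}` is the top `L`-term of `x`, then `(ad x)^n I_N` has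
`I_{N + n m₀}`-coefficient `∏_{k<n} a (N + k m₀) ≠ 0` for `N` large. Since `θ` intertwines
`ad (θ x)` with `-ad x`, it preserves ad-nilpotency, so `θ(I_k) ∈ Q`. Finally `H ⊕ ℂC_LI` is
spanned by brackets `⁅y, I_k⁆`, and `θ⁅y, I_k⁆ = ⁅θ I_k, θ y⁆ ∈ ⁅Q, 𝔏⁆ ⊆ H ⊕ ℂC_LI`.
-/

open Submodule

theorem HVIx.l_injective : Function.Injective HVIx.l := fun _ _ => HVIx.l.inj

theorem lie_mem_of_mem_span {R L : Type*} [CommRing R] [LieRing L] [LieAlgebra R L]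
    {S T : Set L} {P : Submodule R L} (h : ∀ a ∈ S, ∀ b ∈ T, ⁅a, b⁆ ∈ P)
    {a b : L} (ha : a ∈ span R S) (hb : b ∈ span R T) : ⁅a, b⁆ ∈ P := by
  induction ha, hb using span_induction₂ with
  | mem_mem a b ha hb => exact h a ha b hb
  | zero_left b _ => simp
  | zero_right a _ => simp
  | add_left a₁ a₂ b _ _ _ h₁ h₂ => simpa only [add_lie] using add_mem h₁ h₂
  | add_right a b₁ b₂ _ _ _ h₁ h₂ => simpa only [lie_add] using add_mem h₁ h₂
  | smul_left r a b _ _ h => simpa only [smul_lie] using smul_mem P r h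
  | smul_right r a b _ _ h => simpa only [lie_smul] using smul_mem P r h

namespace IsConjAntiInvol

variable {𝔤 : Type*} [LieRing 𝔤] [LieAlgebra ℂ 𝔤] {θ : 𝔤 → 𝔤}

def toLinearMap (hθ : IsConjAntiInvol 𝔤 θ) : 𝔤 →ₗ⋆[ℂ] 𝔤 where
  toFun := θ
  map_add' := hθ.map_add
  map_smul' := hθ.map_smul

theorem isNilpotent_ad (hθ : IsConjAntiInvol 𝔤 θ) {x : 𝔤}
    (hx : IsNilpotent (LieAlgebra.ad ℂ 𝔤 x)) : IsNilpotent (LieAlgebra.ad ℂ 𝔤 (θ x)) := by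
  obtain ⟨n, hn⟩ := hx
  have hsemiconj :
      Function.Semiconj θ ⇑(-LieAlgebra.ad ℂ 𝔤 x) ⇑(LieAlgebra.ad ℂ 𝔤 (θ x)) := fun y => by
    change hθ.toLinearMap (-⁅x, y⁆) = ⁅θ x, θ y⁆
    rw [map_neg, ← lie_skew (θ x) (θ y)]
    exact congrArg Neg.neg (hθ.map_bracket x y)
  refine ⟨n, LinearMap.ext fun y => ?_⟩
  rw [← hθ.invol y, Module.End.coe_pow, ← (hsemiconj.iterate_right n) (θ y), ← Module.End.coe_pow,
    neg_pow, hn, mul_zero, LinearMap.zero_apply, LinearMap.zero_apply]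
  exact map_zero hθ.toLinearMap

end IsConjAntiInvol

namespace THV

variable {𝔏 : Type*} [LieRing 𝔏] [LieAlgebra ℂ 𝔏] (s : THV 𝔏)

def centralSpan : Submodule ℂ 𝔏 := span ℂ {s.CL, s.CI, s.CLI}

/-- `H ⊕ ℂC_LI`. -/
def heisenbergSpan : Submodule ℂ 𝔏 := span ℂ (Set.range s.I ∪ {s.CI, s.CLI})

/-- `H ⊕ ℂC_LI ⊕ ℂC_L`. -/
def heisenbergCentralSpan : Submodule ℂ 𝔏 := span ℂ (Set.range s.I ∪ {s.CL, s.CI, s.CLI})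

theorem I_mem_heisenbergSpan (n : ℤ) : s.I n ∈ s.heisenbergSpan :=
  subset_span (Or.inl ⟨n, rfl⟩)

theorem CI_mem_heisenbergSpan : s.CI ∈ s.heisenbergSpan := subset_span (Or.inr (by simp))

theorem CLI_mem_heisenbergSpan : s.CLI ∈ s.heisenbergSpan := subset_span (Or.inr (by simp))

theorem heisenbergSpan_le_heisenbergCentralSpan : s.heisenbergSpan ≤ s.heisenbergCentralSpan :=
  span_mono (Set.union_subset_union_right _ (by simp))

theorem lie_eq_zero_of_mem_centralSpan (x : 𝔏) {z : 𝔏} (hz : z ∈ s.centralSpan) : ⁅x, z⁆ = 0 :=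
  (span_le (p := LinearMap.ker (LieAlgebra.ad ℂ 𝔏 x)) |>.mpr (by
    rintro _ (rfl | rfl | rfl)
    exacts [s.central_CL x, s.central_CI x, s.central_CLI x])) hz

theorem repr_i_eq_zero_of_mem_centralSpan {z : 𝔏} (hz : z ∈ s.centralSpan) (k : ℤ) :
    s.b.repr z (.i k) = 0 :=
  (span_le (p := LinearMap.ker (s.b.coord (.i k))) |>.mpr (by
    rintro _ (rfl | rfl | rfl) <;> simp [CL, CI, CLI])) hz

theorem lie_mem_centralSpan {v w : 𝔏} (hv : v ∈ s.heisenbergCentralSpan)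
    (hw : w ∈ s.heisenbergCentralSpan) : ⁅v, w⁆ ∈ s.centralSpan := by
  refine lie_mem_of_mem_span (fun a ha b hb => ?_) hv hw
  rcases hb with ⟨k, rfl⟩ | hb
  · rcases ha with ⟨n, rfl⟩ | ha
    · rw [I, I, s.bracket_II]
      split_ifs
      exacts [smul_mem _ _ (subset_span (by simp [CI])), zero_mem _]
    · rw [← lie_skew, s.lie_eq_zero_of_mem_centralSpan _ (subset_span ha), neg_zero]
      exact zero_mem _
  · rw [s.lie_eq_zero_of_mem_centralSpan _ (subset_span hb)]
    exact zero_mem _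

theorem lie_mem_heisenbergSpan {v : 𝔏} (hv : v ∈ s.heisenbergCentralSpan) (y : 𝔏) :
    ⁅v, y⁆ ∈ s.heisenbergSpan := by
  have hy : y ∈ span ℂ (Set.range s.b) := s.b.span_eq ▸ mem_top
  refine lie_mem_of_mem_span (fun a ha b hb => ?_) hv hy
  obtain ⟨j, rfl⟩ := hb
  rcases ha with ⟨n, rfl⟩ | ha
  · cases j with
    | l m =>
      rw [← lie_skew, I, s.bracket_LI m n]
      refine neg_mem (add_mem (smul_mem _ _ (s.I_mem_heisenbergSpan _)) ?_)
      split_ifs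
      exacts [smul_mem _ _ s.CLI_mem_heisenbergSpan, zero_mem _]
    | i k =>
      rw [I, s.bracket_II]
      split_ifs
      exacts [smul_mem _ _ s.CI_mem_heisenbergSpan, zero_mem _]
    | cl => rw [s.central_CL]; exact zero_mem _
    | ci => rw [s.central_CI]; exact zero_mem _
    | cli => rw [s.central_CLI]; exact zero_mem _
  · rw [← lie_skew, s.lie_eq_zero_of_mem_centralSpan _ (subset_span ha), neg_zero]
    exact zero_mem _

theorem isNilpotent_ad_of_mem {x : 𝔏} (hx : x ∈ s.heisenbergCentralSpan) :
    IsNilpotent (LieAlgebra.ad ℂ 𝔏 x) := by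
  refine ⟨3, LinearMap.ext fun y => ?_⟩
  have h₁ := s.heisenbergSpan_le_heisenbergCentralSpan (s.lie_mem_heisenbergSpan hx y)
  have h₂ := s.lie_mem_centralSpan hx h₁
  simpa [pow_succ, LieAlgebra.ad_apply] using s.lie_eq_zero_of_mem_centralSpan x h₂

theorem basis_mem_heisenbergCentralSpan {i : HVIx} (hi : i ∉ Set.range HVIx.l) :
    s.b i ∈ s.heisenbergCentralSpan := by
  cases i with
  | l m => exact absurd ⟨m, rfl⟩ hi
  | i n => exact subset_span (Or.inl ⟨n, rfl⟩)
  | cl => exact subset_span (Or.inr (by simp [CL]))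
  | ci => exact subset_span (Or.inr (by simp [CI]))
  | cli => exact subset_span (Or.inr (by simp [CLI]))

theorem mem_heisenbergCentralSpan_of_repr_l {x : 𝔏} (hx : ∀ m, s.b.repr x (.l m) = 0) :
    x ∈ s.heisenbergCentralSpan := by
  rw [← s.b.linearCombination_repr x, Finsupp.linearCombination_apply]
  refine Submodule.finsuppSum_mem _ _ _ _ fun i hi => smul_mem _ _ ?_
  refine s.basis_mem_heisenbergCentralSpan ?_
  rintro ⟨m, rfl⟩
  exact hi (hx m)

theorem repr_lie_L_i {w : 𝔏} (hw : w ∈ s.heisenbergCentralSpan) (m j : ℤ) :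
    s.b.repr ⁅s.L m, w⁆ (.i j) = ((j - m : ℤ) : ℂ) * s.b.repr w (.i (j - m)) := by
  change (s.b.coord (.i j)).comp (LieAlgebra.ad ℂ 𝔏 (s.L m)) w =
    (((j - m : ℤ) : ℂ) • s.b.coord (.i (j - m))) w
  refine LinearMap.eqOn_span' (fun a ha => ?_) hw
  rcases ha with ⟨k, rfl⟩ | ha
  · simp only [LinearMap.comp_apply, LieAlgebra.ad_apply, L, I, s.bracket_LI, LinearMap.smul_apply,
      Module.Basis.coord_apply, map_add, map_smul, Module.Basis.repr_self]
    obtain rfl | hk := eq_or_ne k (j - m)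
    · split_ifs <;> simp
    · have hk' : m + k ≠ j := by omega
      split_ifs <;> simp [hk, hk']
  · simp [s.lie_eq_zero_of_mem_centralSpan _ (subset_span ha),
      s.repr_i_eq_zero_of_mem_centralSpan (subset_span ha)]

noncomputable def lSupport (x : 𝔏) : Finset ℤ :=
  (s.b.repr x).support.preimage HVIx.l HVIx.l_injective.injOn

theorem mem_lSupport {x : 𝔏} {m : ℤ} : m ∈ s.lSupport x ↔ s.b.repr x (.l m) ≠ 0 := by
  rw [lSupport, Finset.mem_preimage, Finsupp.mem_support_iff]

theorem repr_lie_i (x : 𝔏) {w : 𝔏} (hw : w ∈ s.heisenbergCentralSpan) (j : ℤ) :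
    s.b.repr ⁅x, w⁆ (.i j) = ∑ m ∈ s.lSupport x,
      s.b.repr x (.l m) * (((j - m : ℤ) : ℂ) * s.b.repr w (.i (j - m))) := by
  conv_lhs => rw [← s.b.linearCombination_repr x, Finsupp.linearCombination_apply, Finsupp.sum,
    sum_lie]
  simp only [smul_lie, map_sum, map_smul, Finsupp.coe_finsetSum, Finset.sum_apply,
    Finsupp.smul_apply, smul_eq_mul]
  have hnonL : ∀ i ∉ Set.range HVIx.l, s.b.repr ⁅s.b i, w⁆ (.i j) = 0 := fun i hi =>
    s.repr_i_eq_zero_of_mem_centralSpan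
      (s.lie_mem_centralSpan (s.basis_mem_heisenbergCentralSpan hi) hw) j
  rw [lSupport, ← Finset.sum_preimage HVIx.l _ HVIx.l_injective.injOn _ fun i _ hi => by
    rw [hnonL i hi, mul_zero]]
  exact Finset.sum_congr rfl fun m _ => congrArg _ (s.repr_lie_L_i hw m j)

structure HasLeadingI (w : 𝔏) (t : ℤ) (c : ℂ) : Prop where
  mem : w ∈ s.heisenbergCentralSpan
  repr_of_lt : ∀ k, t < k → s.b.repr w (.i k) = 0
  repr_eq : s.b.repr w (.i t) = c

theorem hasLeadingI_I (n : ℤ) : s.HasLeadingI (s.I n) n 1 where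
  mem := s.heisenbergSpan_le_heisenbergCentralSpan (s.I_mem_heisenbergSpan n)
  repr_of_lt k hk := by simp [I, hk.ne]
  repr_eq := by simp [I]

variable {s}

theorem HasLeadingI.lie {x w : 𝔏} {m₀ t : ℤ} {c : ℂ} (hx : ∀ m ∈ s.lSupport x, m ≤ m₀)
    (hw : s.HasLeadingI w t c) :
    s.HasLeadingI ⁅x, w⁆ (t + m₀) (s.b.repr x (.l m₀) * t * c) where
  mem := by
    rw [← lie_skew]
    exact neg_mem (s.heisenbergSpan_le_heisenbergCentralSpan (s.lie_mem_heisenbergSpan hw.mem x))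
  repr_of_lt k hk := by
    rw [s.repr_lie_i x hw.mem]
    refine Finset.sum_eq_zero fun m hm => ?_
    rw [hw.repr_of_lt _ (by linarith [hx m hm]), mul_zero, mul_zero]
  repr_eq := by
    rw [s.repr_lie_i x hw.mem, Finset.sum_eq_single m₀]
    · simp [hw.repr_eq, mul_assoc]
    · intro m hm hne
      rw [hw.repr_of_lt _ (by linarith [lt_of_le_of_ne (hx m hm) hne]), mul_zero, mul_zero]
    · intro h
      rw [not_ne_iff.mp (s.mem_lSupport.not.mp h), zero_mul]

theorem HasLeadingI.ad_pow {x w : 𝔏} {m₀ t : ℤ} {c : ℂ} (hx : ∀ m ∈ s.lSupport x, m ≤ m₀)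
    (hw : s.HasLeadingI w t c) (n : ℕ) :
    s.HasLeadingI ((LieAlgebra.ad ℂ 𝔏 x ^ n) w) (t + n * m₀)
      (c * ∏ k ∈ Finset.range n, s.b.repr x (.l m₀) * ((t + k * m₀ : ℤ) : ℂ)) := by
  induction n with
  | zero => simpa using hw
  | succ n ih =>
    rw [pow_succ', Module.End.mul_apply, LieAlgebra.ad_apply]
    convert ih.lie hx using 1
    · push_cast; ring
    · rw [Finset.prod_range_succ]; ring

variable (s)

theorem mem_heisenbergCentralSpan_of_isNilpotent_ad {x : 𝔏}
    (hx : IsNilpotent (LieAlgebra.ad ℂ 𝔏 x)) : x ∈ s.heisenbergCentralSpan := by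
  by_contra hxQ
  obtain ⟨n, hn⟩ := hx
  have hne : (s.lSupport x).Nonempty := by
    by_contra h
    exact hxQ (s.mem_heisenbergCentralSpan_of_repr_l fun m =>
      by_contra fun hm => h ⟨m, s.mem_lSupport.mpr hm⟩)
  set m₀ := (s.lSupport x).max' hne
  set N := n * |m₀| + 1
  have hlead := (s.hasLeadingI_I N).ad_pow (m₀ := m₀) (fun m hm => (s.lSupport x).le_max' m hm) n
  rw [hn, LinearMap.zero_apply] at hlead
  have hprod := hlead.repr_eq
  rw [map_zero, Finsupp.zero_apply, one_mul, eq_comm, Finset.prod_eq_zero_iff] at hprod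
  obtain ⟨k, hk, hzero⟩ := hprod
  have hm₀ : s.b.repr x (.l m₀) ≠ 0 := s.mem_lSupport.mp ((s.lSupport x).max'_mem hne)
  have hk : (k : ℤ) < n := by simpa using hk
  have hNk : N + k * m₀ ≠ 0 := by nlinarith [neg_abs_le m₀, abs_nonneg m₀]
  exact mul_ne_zero hm₀ (Int.cast_ne_zero.mpr hNk) hzero

theorem mem_heisenbergCentralSpan_iff_isNilpotent_ad {x : 𝔏} :
    x ∈ s.heisenbergCentralSpan ↔ IsNilpotent (LieAlgebra.ad ℂ 𝔏 x) :=
  ⟨s.isNilpotent_ad_of_mem, s.mem_heisenbergCentralSpan_of_isNilpotent_ad⟩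

theorem heisenbergSpan_le_span_lie_I :
    s.heisenbergSpan ≤ span ℂ {x | ∃ (y : 𝔏) (k : ℤ), ⁅y, s.I k⁆ = x} := by
  have hmem (y : 𝔏) (k : ℤ) : ⁅y, s.I k⁆ ∈ span ℂ {x | ∃ (y : 𝔏) (k : ℤ), ⁅y, s.I k⁆ = x} :=
    subset_span ⟨y, k, rfl⟩
  -- uniform in `n`: for `n = 0` the `C_LI`-term has coefficient `1² - 1 = 0`
  have hI (n : ℤ) : s.I n = -⁅s.L (n + 1), s.I (-1)⁆ := by
    rw [L, I, I, s.bracket_LI]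
    split_ifs with hn
    · obtain rfl : n = 0 := by omega
      simp
    · simp
  have hCI : s.CI = ⁅s.I (-1), s.I 1⁆ := by simp [I, CI, s.bracket_II]
  have hCLI : s.CLI = (1 / 2 : ℂ) • (⁅s.L (-1), s.I 1⁆ + ⁅s.L 1, s.I (-1)⁆) := by
    simp only [L, I, CLI, s.bracket_LI]
    norm_num
    module
  refine span_le.mpr ?_
  rintro _ (⟨n, rfl⟩ | rfl | rfl)
  · rw [hI n]
    exact neg_mem (hmem _ _)
  · rw [hCI]
    exact hmem _ _
  · rw [hCLI]
    exact smul_mem _ _ (add_mem (hmem _ _) (hmem _ _))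

theorem image_heisenbergSpan_subset {θ : 𝔏 → 𝔏} (hθ : IsConjAntiInvol 𝔏 θ) :
    θ '' s.heisenbergSpan ⊆ s.heisenbergSpan := by
  refine (Set.image_mono (SetLike.coe_subset_coe.mpr s.heisenbergSpan_le_span_lie_I)).trans ?_
  refine (image_span_subset hθ.toLinearMap _ _).mpr ?_
  rintro _ ⟨y, k, rfl⟩
  have hI := s.heisenbergSpan_le_heisenbergCentralSpan (s.I_mem_heisenbergSpan k)
  have hθI : θ (s.I k) ∈ s.heisenbergCentralSpan := by
    rw [s.mem_heisenbergCentralSpan_iff_isNilpotent_ad] at hI ⊢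
    exact hθ.isNilpotent_ad hI
  change θ ⁅y, s.I k⁆ ∈ _
  rw [hθ.map_bracket]
  exact s.lie_mem_heisenbergSpan hθI _

end THV

/-- For any conjugate-linear anti-involution `θ` of `𝔏` one has
`θ(H ⊕ ℂC_LI) = H ⊕ ℂC_LI`, where `H = (⊕ₙ ℂI_n) ⊕ ℂC_I`. -/
theorem theta_preserves_H_CLI (𝔏 : Type*) [LieRing 𝔏] [LieAlgebra ℂ 𝔏] (s : THV 𝔏)
    (θ : 𝔏 → 𝔏) (hθ : IsConjAntiInvol 𝔏 θ) :
    θ '' (Submodule.span ℂ (Set.range s.I ∪ {s.CI, s.CLI}) : Set 𝔏) =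
      (Submodule.span ℂ (Set.range s.I ∪ {s.CI, s.CLI}) : Set 𝔏) := by
  have h : θ '' s.heisenbergSpan ⊆ s.heisenbergSpan := s.image_heisenbergSpan_subset hθ
  exact h.antisymm fun y hy => ⟨θ y, h ⟨y, hy, rfl⟩, hθ.invol y⟩
end

section
/- For every nonzero real number α and every real number γ, the map θ⁺_{α,γ} defined on basis elements by θ⁺_{α,γ}(L_n) = αⁿL_{−n}, θ⁺_{α,γ}(C_L) = C_L, θ⁺_{α,γ}(I_m) = α^m e^{iγ} I_{−m} for m ≠ 0, θ⁺_{α,γ}(I_0) = e^{iγ}I_0 + 2e^{iγ}C_{LI}, θ⁺_{α,γ}(C_I) = e^{2iγ}C_I, θ⁺_{α,γ}(C_{LI}) = −e^{iγ}C_{LI}, extended conjugate-linearly, is a conjugate-linear anti-involution of the twisted Heisenberg-Virasoro algebra 𝔏. -/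
namespace THV

variable {𝔏 : Type*} [LieRing 𝔏] [LieAlgebra ℂ 𝔏]

/-- Images of the basis vectors under `θ⁺_{α,γ}`. -/
noncomputable def thetaPlusB (s : THV 𝔏) (α γ : ℝ) : HVIx → 𝔏
  | .l n => ((α : ℂ) ^ n) • s.L (-n)
  | .i n => if n = 0 then
      Complex.exp (Complex.I * (γ : ℂ)) • s.I 0 +
        (2 * Complex.exp (Complex.I * (γ : ℂ))) • s.CLI
    else ((α : ℂ) ^ n * Complex.exp (Complex.I * (γ : ℂ))) • s.I (-n)
  | .cl => s.CL
  | .ci => Complex.exp (2 * Complex.I * (γ : ℂ)) • s.CI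
  | .cli => -(Complex.exp (Complex.I * (γ : ℂ)) • s.CLI)

/-- The map `θ⁺_{α,γ}`, defined on the basis elements by
`θ⁺(L n) = αⁿ L₋ₙ`, `θ⁺(C_L) = C_L`, `θ⁺(I m) = αᵐ e^{iγ} I₋ₘ (m ≠ 0)`,
`θ⁺(I 0) = e^{iγ} I 0 + 2 e^{iγ} C_LI`, `θ⁺(C_I) = e^{2iγ} C_I`,
`θ⁺(C_LI) = -e^{iγ} C_LI`, and extended conjugate-linearly. -/
noncomputable def thetaPlus (s : THV 𝔏) (α γ : ℝ) : 𝔏 → 𝔏 :=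
  fun x => (s.b.repr x).sum fun ix c => (starRingEnd ℂ) c • s.thetaPlusB α γ ix

end THV

/-!
θ⁺ is by definition the conjugate-linear extension of its values on the basis. Both sides of
`θ⁅x, y⁆ = ⁅θ y, θ x⁆` are conjugate-linear in each variable and `θ ∘ θ` is linear, so both
properties reduce to basis elements, where they are finite computations with the structure
constants: the brackets come down to `αᵐ α⁻ᵐ = 1`, and `θ² = id` to `ᾱ = α` and `|e^{iγ}| = 1`.
-/

namespace Module.Basis

section

variable {ι R S M N : Type*} [Semiring R] [Semiring S] [AddCommMonoid M] [Module R M]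
  [AddCommMonoid N] [Module S N]

noncomputable def constrₛₗ (b : Basis ι R M) (σ : R →+* S) (f : ι → N) : M →ₛₗ[σ] N where
  toFun x := (b.repr x).sum fun i c => σ c • f i
  map_add' x y := by
    rw [map_add, Finsupp.sum_add_index'] <;> simp [add_smul]
  map_smul' c x := by
    rw [map_smul, Finsupp.sum_smul_index' (by simp), Finsupp.smul_sum]
    simp [smul_smul]

@[simp]
theorem constrₛₗ_basis (b : Basis ι R M) (σ : R →+* S) (f : ι → N) (i : ι) :
    b.constrₛₗ σ f (b i) = f i := by
  simp [constrₛₗ]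

end

theorem map_lie_eq_lie_map_swap {ι R L : Type*} [CommRing R] [LieRing L] [LieAlgebra R L]
    {σ : R →+* R} (b : Basis ι R L) (θ : L →ₛₗ[σ] L)
    (h : ∀ i j, θ ⁅b i, b j⁆ = ⁅θ (b j), θ (b i)⁆) (x y : L) :
    θ ⁅x, y⁆ = ⁅θ y, θ x⁆ := by
  induction b.mem_span x using Submodule.span_induction generalizing y with
  | mem _ hx =>
    obtain ⟨i, rfl⟩ := hx
    induction b.mem_span y using Submodule.span_induction with
    | mem _ hy =>
      obtain ⟨j, rfl⟩ := hy
      exact h i j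
    | zero => simp
    | add y z _ _ hy hz => rw [lie_add, map_add, hy, hz, map_add, add_lie]
    | smul c y _ hy => rw [lie_smul, map_smulₛₗ, hy, map_smulₛₗ, smul_lie]
  | zero => simp
  | add x z _ _ hx hz => rw [add_lie, map_add, hx, hz, map_add, lie_add]
  | smul c x _ hx => rw [smul_lie, map_smulₛₗ, hx, map_smulₛₗ, lie_smul]

end Module.Basis

theorem IsConjAntiInvol.of_basis {ι 𝔤 : Type*} [LieRing 𝔤] [LieAlgebra ℂ 𝔤]
    (b : Module.Basis ι ℂ 𝔤) (θ : 𝔤 →ₛₗ[starRingEnd ℂ] 𝔤)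
    (hlie : ∀ i j, θ ⁅b i, b j⁆ = ⁅θ (b j), θ (b i)⁆) (hinv : ∀ i, θ (θ (b i)) = b i) :
    IsConjAntiInvol 𝔤 θ where
  map_add := _root_.map_add θ
  map_smul := map_smulₛₗ θ
  map_bracket := b.map_lie_eq_lie_map_swap θ hlie
  invol x := LinearMap.congr_fun (b.ext (f₁ := θ.comp θ) (f₂ := LinearMap.id) hinv) x

namespace THV

variable {𝔏 : Type*} [LieRing 𝔏] [LieAlgebra ℂ 𝔏] (s : THV 𝔏)

-- The `if` sits in the scalar, so that under `simp [-ite_smul]` the central terms are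
-- killed by `smul_lie` and the centrality lemmas below.
theorem lie_L_L (m n : ℤ) : ⁅s.L m, s.L n⁆ =
    ((n : ℂ) - m) • s.L (m + n) + (if m + n = 0 then ((m : ℂ) ^ 3 - m) / 12 else 0) • s.CL := by
  rw [ite_smul, zero_smul]
  exact s.bracket_LL m n

theorem lie_L_I (m n : ℤ) : ⁅s.L m, s.I n⁆ =
    (n : ℂ) • s.I (m + n) + (if m + n = 0 then (m : ℂ) ^ 2 - m else 0) • s.CLI := by
  rw [ite_smul, zero_smul]
  exact s.bracket_LI m n

theorem lie_I_I (m n : ℤ) : ⁅s.I m, s.I n⁆ = (if m + n = 0 then (n : ℂ) else 0) • s.CI := by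
  rw [ite_smul, zero_smul]
  exact s.bracket_II m n

theorem lie_I_L (m n : ℤ) : ⁅s.I m, s.L n⁆ =
    -((m : ℂ) • s.I (n + m) + (if n + m = 0 then (n : ℂ) ^ 2 - n else 0) • s.CLI) := by
  rw [← lie_skew, lie_L_I]

@[simp] theorem lie_CL (x : 𝔏) : ⁅x, s.CL⁆ = 0 := s.central_CL x
@[simp] theorem lie_CI (x : 𝔏) : ⁅x, s.CI⁆ = 0 := s.central_CI x
@[simp] theorem lie_CLI (x : 𝔏) : ⁅x, s.CLI⁆ = 0 := s.central_CLI x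
@[simp] theorem CL_lie (x : 𝔏) : ⁅s.CL, x⁆ = 0 := by rw [← lie_skew, lie_CL, neg_zero]
@[simp] theorem CI_lie (x : 𝔏) : ⁅s.CI, x⁆ = 0 := by rw [← lie_skew, lie_CI, neg_zero]
@[simp] theorem CLI_lie (x : 𝔏) : ⁅s.CLI, x⁆ = 0 := by rw [← lie_skew, lie_CLI, neg_zero]

@[simp] theorem b_l (n : ℤ) : s.b (.l n) = s.L n := rfl
@[simp] theorem b_i (n : ℤ) : s.b (.i n) = s.I n := rfl
@[simp] theorem b_cl : s.b .cl = s.CL := rfl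
@[simp] theorem b_ci : s.b .ci = s.CI := rfl
@[simp] theorem b_cli : s.b .cli = s.CLI := rfl

-- The basis images of `θ⁺_{α,γ}` with `a = α`, `ε = e^{iγ}`, written so that `I 0` is no
-- separate case.
noncomputable def thetaImage (a ε : ℂ) : HVIx → 𝔏
  | .l n => a ^ n • s.L (-n)
  | .i n => (a ^ n * ε) • s.I (-n) + (if n = 0 then 2 * ε else 0) • s.CLI
  | .cl => s.CL
  | .ci => ε ^ 2 • s.CI
  | .cli => -ε • s.CLI

noncomputable def theta (a ε : ℂ) : 𝔏 →ₛₗ[starRingEnd ℂ] 𝔏 :=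
  s.b.constrₛₗ (starRingEnd ℂ) (s.thetaImage a ε)

variable {s} {a ε : ℂ}

@[simp] theorem theta_L (n : ℤ) : s.theta a ε (s.L n) = a ^ n • s.L (-n) :=
  s.b.constrₛₗ_basis _ _ (.l n)

@[simp] theorem theta_I (n : ℤ) : s.theta a ε (s.I n) =
    (a ^ n * ε) • s.I (-n) + (if n = 0 then 2 * ε else 0) • s.CLI :=
  s.b.constrₛₗ_basis _ _ (.i n)

@[simp] theorem theta_CL : s.theta a ε s.CL = s.CL := s.b.constrₛₗ_basis _ _ .cl

@[simp] theorem theta_CI : s.theta a ε s.CI = ε ^ 2 • s.CI := s.b.constrₛₗ_basis _ _ .ci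

@[simp] theorem theta_CLI : s.theta a ε s.CLI = -ε • s.CLI := s.b.constrₛₗ_basis _ _ .cli

theorem theta_lie_L_L (ha : a ≠ 0) (m n : ℤ) :
    s.theta a ε ⁅s.L m, s.L n⁆ = ⁅s.theta a ε (s.L n), s.theta a ε (s.L m)⁆ := by
  rcases eq_or_ne (m + n) 0 with h | h
  · obtain rfl : n = -m := by omega
    simp [-ite_smul, map_ofNat, lie_L_L, smul_smul, zpow_neg]
    match_scalars <;> field_simp
  · simp [-ite_smul, lie_L_L, smul_smul, h, show -n + -m ≠ 0 by omega, zpow_add₀ ha]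
    match_scalars
    ring

theorem theta_lie_L_I (ha : a ≠ 0) (m n : ℤ) :
    s.theta a ε ⁅s.L m, s.I n⁆ = ⁅s.theta a ε (s.I n), s.theta a ε (s.L m)⁆ := by
  rcases eq_or_ne (m + n) 0 with h | h
  · obtain rfl : n = -m := by omega
    simp [-ite_smul, lie_L_I, lie_I_L, smul_smul, zpow_neg]
    match_scalars
    · field_simp
      ring
    · field_simp
  · simp [-ite_smul, lie_L_I, lie_I_L, smul_smul, h, show -n + -m ≠ 0 by omega, zpow_add₀ ha,
      add_comm (-m) (-n)]
    match_scalars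
    ring

theorem theta_lie_I_I (ha : a ≠ 0) (m n : ℤ) :
    s.theta a ε ⁅s.I m, s.I n⁆ = ⁅s.theta a ε (s.I n), s.theta a ε (s.I m)⁆ := by
  rcases eq_or_ne (m + n) 0 with h | h
  · obtain rfl : n = -m := by omega
    simp [-ite_smul, lie_I_I, smul_smul, zpow_neg]
    match_scalars
    field_simp
  · simp [-ite_smul, lie_I_I, h, show -n + -m ≠ 0 by omega]

theorem theta_lie_basis (ha : a ≠ 0) (i j : HVIx) :
    s.theta a ε ⁅s.b i, s.b j⁆ = ⁅s.theta a ε (s.b j), s.theta a ε (s.b i)⁆ := by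
  have swap {x y : 𝔏} (h : s.theta a ε ⁅x, y⁆ = ⁅s.theta a ε y, s.theta a ε x⁆) :
      s.theta a ε ⁅y, x⁆ = ⁅s.theta a ε x, s.theta a ε y⁆ := by
    rw [← lie_skew, map_neg, h, lie_skew]
  cases i <;> cases j <;> simp only [b_l, b_i, b_cl, b_ci, b_cli]
  case l.l m n => exact theta_lie_L_L ha m n
  case l.i m n => exact theta_lie_L_I ha m n
  case i.l m n => exact swap (theta_lie_L_I ha n m)
  case i.i m n => exact theta_lie_I_I ha m n
  all_goals simp

theorem theta_theta_basis (ha : a ≠ 0) (ha_real : starRingEnd ℂ a = a) (hε : ‖ε‖ = 1)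
    (i : HVIx) : s.theta a ε (s.theta a ε (s.b i)) = s.b i := by
  have hε_conj : starRingEnd ℂ ε * ε = 1 := by rw [Complex.conj_mul', hε]; norm_num
  cases i <;> simp [-ite_smul, smul_smul, ha_real]
  case l n => rw [mul_inv_cancel₀ (zpow_ne_zero n ha), one_smul]
  case i n =>
    split_ifs with hn
    · subst hn
      match_scalars
      · simpa using hε_conj
      · simp [map_ofNat]
        ring
    · simp only [map_zero, zero_mul, zero_smul, neg_zero, add_zero]
      match_scalars
      field_simp
      linear_combination hε_conj
  case ci => rw [← mul_pow, hε_conj, one_pow, one_smul]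
  case cli => rw [hε_conj, one_smul]

theorem isConjAntiInvol_theta (s : THV 𝔏) (ha : a ≠ 0) (ha_real : starRingEnd ℂ a = a) (hε : ‖ε‖ = 1) :
    IsConjAntiInvol 𝔏 (s.theta a ε) :=
  .of_basis s.b _ (theta_lie_basis ha) (theta_theta_basis ha ha_real hε)

theorem thetaPlus_eq_theta (s : THV 𝔏) (α γ : ℝ) :
    s.thetaPlus α γ = s.theta α (Complex.exp (Complex.I * γ)) := by
  have h : s.thetaPlusB α γ = s.thetaImage α (Complex.exp (Complex.I * γ)) := by
    funext i
    cases i with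
    | l n => rfl
    | i n =>
      rcases eq_or_ne n 0 with rfl | hn
      · simp [thetaPlusB, thetaImage]
      · simp [thetaPlusB, thetaImage, hn]
    | cl => rfl
    | ci => simp [thetaPlusB, thetaImage, ← Complex.exp_nat_mul, mul_assoc]
    | cli => simp [thetaPlusB, thetaImage]
  rw [theta, ← h]
  rfl

end THV

/-- For every nonzero real `α` and real `γ`, the conjugate-linear extension `θ⁺_{α,γ}`
of the map given on basis elements by `L n ↦ αⁿ L₋ₙ`, `C_L ↦ C_L`,
`I m ↦ αᵐ e^{iγ} I₋ₘ (m ≠ 0)`, `I 0 ↦ e^{iγ} I 0 + 2 e^{iγ} C_LI`, `C_I ↦ e^{2iγ} C_I`,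
`C_LI ↦ -e^{iγ} C_LI` is a conjugate-linear anti-involution of `𝔏`. -/
theorem thetaPlus_isConjAntiInvol (𝔏 : Type*) [LieRing 𝔏] [LieAlgebra ℂ 𝔏] (s : THV 𝔏)
    (α γ : ℝ) (hα : α ≠ 0) :
    IsConjAntiInvol 𝔏 (s.thetaPlus α γ) := by
  rw [s.thetaPlus_eq_theta]
  exact s.isConjAntiInvol_theta (mod_cast hα) (Complex.conj_ofReal α)
    (Complex.norm_exp_I_mul_ofReal γ)
end

section
/- Let α be a nonzero complex number and let (β_m)_{m∈ℤ} be complex numbers satisfying (n−m)β_{m+n} = n·β_n·α^m − m·αⁿ·β_m for all m, n ∈ ℤ with m+n ≠ 0, and β_0 = (1/2)(β_1 α^{−1} + β_{−1} α). Then β_m = ((m+1)/2)·α^{m−1}·β_1 − ((m−1)/2)·α^{m+1}·β_{−1} for all m ∈ ℤ. -/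
/-!
The functional equation is linear in `β`, and for `α ≠ 0` every family `m ↦ αᵐ (p + q m)` solves
it for all `m, n`. Choosing `p, q` so that this family agrees with `β` at `-1, 0, 1`, the difference
`d` vanishes there. The equation for `(m, 1)` reads `(1 - m) d (m + 1) = -m α d m`, which
propagates `d = 0` upwards from `m = 2`; at `m = 1` it degenerates, and `d 2` is recovered from the
equations for `(2, 1)` and `(-1, 3)`, which combine to `4 d 2 = 6 d 2`. The negative side follows
by the symmetry `m ↦ -m`, `α ↦ α⁻¹` of the equation.
-/

variable {K : Type*} [Field K]

def BetaRecursion (α : K) (β : ℤ → K) : Prop :=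
  ∀ m n : ℤ, m + n ≠ 0 → ((n : K) - m) * β (m + n) = n * β n * α ^ m - m * α ^ n * β m

namespace BetaRecursion

variable {α : K} {β γ : ℤ → K}

theorem sub (hβ : BetaRecursion α β) (hγ : BetaRecursion α γ) : BetaRecursion α (β - γ) := by
  intro m n hmn
  simp only [Pi.sub_apply]
  linear_combination hβ m n hmn - hγ m n hmn

theorem comp_neg (hβ : BetaRecursion α β) : BetaRecursion α⁻¹ (fun m ↦ β (-m)) := by
  intro m n hmn
  have h := hβ (-m) (-n) (by omega)
  push_cast at h
  simp only [inv_zpow', neg_add] at h ⊢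
  linear_combination -h

theorem zpow_mul_affine (hα : α ≠ 0) (p q : K) :
    BetaRecursion α (fun m ↦ α ^ m * (p + q * m)) := by
  intro m n _
  push_cast
  rw [zpow_add₀ hα]
  ring

variable [CharZero K] {d : ℤ → K}

theorem eq_zero_of_one_le (hα : α ≠ 0) (hd : BetaRecursion α d) (hd_neg_one : d (-1) = 0)
    (hd_one : d 1 = 0) (m : ℤ) (hm : 1 ≤ m) : d m = 0 := by
  have step (k : ℤ) (hk : 1 < k) (hdk : d k = 0) : d (k + 1) = 0 := by
    have h := hd k 1 (by omega)
    rw [hd_one, hdk] at h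
    have hk' : (1 : K) - k ≠ 0 := sub_ne_zero.2 (by exact_mod_cast (by omega : (1 : ℤ) ≠ k))
    simpa [hk'] using h
  have hd_two : d 2 = 0 := by
    have h21 := hd 2 1 (by norm_num)
    have h13 := hd (-1) 3 (by norm_num)
    norm_num [hd_one, hd_neg_one] at h21 h13
    have : (2 : K) * d 2 = 0 := by
      linear_combination -h13 - 3 * α⁻¹ * h21 - 6 * d 2 * mul_inv_cancel₀ hα
    simpa using this
  induction m, hm using Int.leInduction with
  | base => exact hd_one
  | succ k hk ih =>
    obtain rfl | hk := eq_or_lt_of_le hk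
    · exact hd_two
    · exact step k hk ih

theorem eq_zero (hα : α ≠ 0) (hd : BetaRecursion α d) (hd_neg_one : d (-1) = 0)
    (hd_zero : d 0 = 0) (hd_one : d 1 = 0) : d = 0 := by
  funext m
  rcases lt_trichotomy m 0 with hm | rfl | hm
  · simpa using hd.comp_neg.eq_zero_of_one_le (inv_ne_zero hα) (by simpa) (by simpa) (-m)
      (by omega)
  · exact hd_zero
  · exact hd.eq_zero_of_one_le hα hd_neg_one hd_one m hm

end BetaRecursion

/-- If `α ≠ 0` and the family `(β_m)` satisfies the recursion
`(n - m) β_{m+n} = n βₙ αᵐ - m αⁿ βₘ` for `m + n ≠ 0` together with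
`β₀ = (1/2)(β₁ α⁻¹ + β₋₁ α)`, then
`β_m = ((m+1)/2) α^{m-1} β₁ - ((m-1)/2) α^{m+1} β₋₁` for all `m`. -/
theorem beta_formula (α : ℂ) (hα : α ≠ 0) (β : ℤ → ℂ)
    (hrec : ∀ m n : ℤ, m + n ≠ 0 →
      ((n : ℂ) - (m : ℂ)) * β (m + n) = (n : ℂ) * β n * α ^ m - (m : ℂ) * α ^ n * β m)
    (h0 : β 0 = (1 / 2) * (β 1 * α⁻¹ + β (-1) * α)) :
    ∀ m : ℤ, β m = (((m : ℂ) + 1) / 2) * α ^ (m - 1) * β 1 -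
      (((m : ℂ) - 1) / 2) * α ^ (m + 1) * β (-1) := by
  set p := (1 / 2) * (β 1 * α⁻¹ + β (-1) * α)
  set q := (1 / 2) * (β 1 * α⁻¹ - β (-1) * α)
  have hβ : β = fun m : ℤ ↦ α ^ m * (p + q * m) := by
    refine sub_eq_zero.1 <| BetaRecursion.eq_zero hα
      (BetaRecursion.sub hrec (BetaRecursion.zpow_mul_affine hα p q)) ?_ ?_ ?_
    · simp only [Pi.sub_apply, p, q]
      field_simp
      ring
    · simp [h0, p]
    · simp only [Pi.sub_apply, p, q]
      field_simp
      ring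
  intro m
  rw [hβ, zpow_sub_one₀ hα, zpow_add_one₀ hα]
  simp only [p, q, zpow_neg_one, zpow_one, Int.cast_neg, Int.cast_one]
  field_simp
  ring
end

section
/- Let a ∈ [0,1) be real, let b ∈ 1/2 + √−1·ℝ, let c ∈ ℂ, and let V be a module over the twisted Heisenberg-Virasoro algebra 𝔏 with basis {v_k : k ∈ ℤ} on which C_L, C_I, C_{LI} act as zero, L_m·v_k = (a+k+mb)v_{m+k} for all m,k ∈ ℤ, I_0·v_k = c·v_k for all k ∈ ℤ, and I_1·v_k = μ_k v_{k+1} for some scalars μ_k ∈ ℂ. Then μ_k = c for all k ∈ ℤ, and consequently I_m·v_k = c·v_{m+k} for all m, k ∈ ℤ. -/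
/-! Put `y k = μ k - c`. Applying `[L_{-1}, I_1] = I_0 + 2 C_LI` to `v k` shows that
`(a + k + 1 - b) y k` is a constant `K`; applying `[L_{-2}, I_2] = 2 I_0 + 6 C_LI` and using
`b (1 - b) ≠ 0` gives the recurrence `y (k + 1) + y (k - 2) = y k + y (k - 1)`. No sequence
`K / (a + 1 - b + k)` with `K ≠ 0` satisfies it, so `y k = 0` whenever `a + k + 1 - b ≠ 0`;
this fails for at most one `k`, where the recurrence gives `y k = 0` too. Finally
`[L_{m-1}, I_1] = I_m` (up to a central term) gives `I_m v_k = c v_{m+k}`. -/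

theorem eq_zero_of_add_intCast_mul_eq_of_add_eq_add {x K : ℂ} {y : ℤ → ℂ}
    (hK : ∀ k : ℤ, (x + k) * y k = K)
    (hrec : ∀ k : ℤ, y (k + 1) + y (k - 2) = y k + y (k - 1)) (k : ℤ) : y k = 0 := by
  -- `y j = K / (x + j)` satisfies `y 4 + y 0 = 2 * y 2` (recurrences at 2 and 3) only for `K = 0`
  have hK0 : K = 0 := by
    have e2 := hrec 2
    have e3 := hrec 3
    have h0 := hK 0
    have h2 := hK 2
    have h4 := hK 4
    norm_num at e2 e3 h0 h2 h4
    linear_combination (x * (x + 2) * (x + 4) * (e2 + e3) - x * (x + 2) * h4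
      - (x + 2) * (x + 4) * h0 + 2 * x * (x + 4) * h2) / 8
  have hy : ∀ j : ℤ, x + j ≠ 0 → y j = 0 := fun j hj =>
    (mul_eq_zero.1 ((hK j).trans hK0)).resolve_left hj
  by_cases hk : x + k = 0
  · -- `x + j` vanishes for at most one `j`, so the recurrence at `k + 1` determines `y k`
    have hne : ∀ j : ℤ, j ≠ k → x + j ≠ 0 := by
      intro j hjk hj
      have : ((j - k : ℤ) : ℂ) = 0 := by push_cast; linear_combination hj - hk
      exact hjk (sub_eq_zero.1 (Int.cast_eq_zero.1 this))
    have e := hrec (k + 1)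
    rw [add_sub_cancel_right, show k + 1 - 2 = k - 1 by ring,
      hy _ (hne _ (by omega)), hy _ (hne _ (by omega)), hy _ (hne _ (by omega))] at e
    linear_combination -e
  · exact hy k hk

theorem add_intCast_mul_sub_eq_mul_sub_zero {α b c : ℂ} {μ : ℤ → ℂ}
    (h₁ : ∀ k : ℤ, μ k * (α + k + 1 - b) - (α + k - b) * μ (k - 1) = c) (k : ℤ) :
    (α + 1 - b + k) * (μ k - c) = (α + 1 - b) * (μ 0 - c) := by
  have hper : Function.Periodic (fun j : ℤ => (α + 1 - b + j) * (μ j - c)) 1 := by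
    intro j
    have := h₁ (j + 1)
    rw [add_sub_cancel_right] at this
    push_cast at this ⊢
    linear_combination this
  simpa using hper.int_mul_eq k

theorem sub_add_sub_eq_of_coeff_relations {α b c K : ℂ} {μ : ℤ → ℂ} (hb₀ : b ≠ 0) (hb₁ : b ≠ 1)
    (hK : ∀ k : ℤ, (α + 1 - b + k) * (μ k - c) = K)
    (h₂ : ∀ k : ℤ, (μ k * (α + k + 1 + b) - (α + k + b) * μ (k + 1)) * (α + k + 2 - 2 * b)
      - (α + k - 2 * b) * (μ (k - 2) * (α + k - 1 + b) - (α + k - 2 + b) * μ (k - 1)) = 2 * c)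
    (k : ℤ) : (μ (k + 1) - c) + (μ (k - 2) - c) = (μ k - c) + (μ (k - 1) - c) := by
  have e := h₂ k
  have e₁ := hK (k + 1)
  have e₀ := hK k
  have e₃ := hK (k - 1)
  have e₄ := hK (k - 2)
  push_cast at e₁ e₃ e₄
  have hb : 2 * b * (1 - b) ≠ 0 :=
    mul_ne_zero (mul_ne_zero two_ne_zero hb₀) (sub_ne_zero.2 hb₁.symm)
  -- modulo the relations `hK`, the relation `h₂` at `k` is `2b(1 - b)` times the recurrence
  refine sub_eq_zero.1 ((mul_eq_zero.1 ?_).resolve_left hb)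
  linear_combination -e + (α + k + 2) * e₀ - (α + k) * e₁ - (α + k) * e₄ + (α + k - 2) * e₃

theorem eq_of_coeff_relations {α b c : ℂ} {μ : ℤ → ℂ} (hb₀ : b ≠ 0) (hb₁ : b ≠ 1)
    (h₁ : ∀ k : ℤ, μ k * (α + k + 1 - b) - (α + k - b) * μ (k - 1) = c)
    (h₂ : ∀ k : ℤ, (μ k * (α + k + 1 + b) - (α + k + b) * μ (k + 1)) * (α + k + 2 - 2 * b)
      - (α + k - 2 * b) * (μ (k - 2) * (α + k - 1 + b) - (α + k - 2 + b) * μ (k - 1)) = 2 * c)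
    (k : ℤ) : μ k = c :=
  have hK := add_intCast_mul_sub_eq_mul_sub_zero h₁
  sub_eq_zero.1 <| eq_zero_of_add_intCast_mul_eq_of_add_eq_add (y := fun j => μ j - c) hK
    (sub_add_sub_eq_of_coeff_relations hb₀ hb₁ hK h₂) k

section LieModule

variable {𝔏 : Type*} [LieRing 𝔏] [LieAlgebra ℂ 𝔏]
  {V : Type*} [AddCommGroup V] [Module ℂ V] [LieRingModule 𝔏 V] [LieModule ℂ 𝔏 V]

theorem lie_lie_apply_of_shift {ℓ : ℤ → 𝔏} {v : ℤ → V} {α b : ℂ}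
    (hℓ : ∀ m k : ℤ, ⁅ℓ m, v k⁆ = (α + k + m * b) • v (m + k))
    {x : 𝔏} {n : ℤ} {ν : ℤ → ℂ} (hx : ∀ k : ℤ, ⁅x, v k⁆ = ν k • v (k + n)) (m k : ℤ) :
    ⁅⁅ℓ m, x⁆, v k⁆
      = (ν k * (α + (k + n : ℤ) + m * b) - (α + k + m * b) * ν (m + k)) • v (m + k + n) := by
  rw [lie_lie, hx, lie_smul, hℓ, hℓ, lie_smul, hx, smul_smul, smul_smul, sub_smul,
    ← add_assoc m k n]

namespace THV

variable (s : THV 𝔏)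

theorem lie_lie_L_I_apply {w : V} (hw : ⁅s.CLI, w⁆ = 0) (m n : ℤ) :
    ⁅⁅s.L m, s.I n⁆, w⁆ = (n : ℂ) • ⁅s.I (m + n), w⁆ := by
  unfold L I CLI at *
  rw [s.bracket_LI, add_lie, smul_lie]
  split_ifs
  · rw [smul_lie, hw, smul_zero, add_zero]
  · rw [zero_lie, add_zero]

theorem lie_I_add_one_apply {v : ℤ → V} {α b : ℂ} {μ : ℤ → ℂ}
    (hL : ∀ m k : ℤ, ⁅s.L m, v k⁆ = (α + k + m * b) • v (m + k))
    (hCLI : ∀ k : ℤ, ⁅s.CLI, v k⁆ = 0) (hI₁ : ∀ k : ℤ, ⁅s.I 1, v k⁆ = μ k • v (k + 1))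
    (m k : ℤ) : ⁅s.I (m + 1), v k⁆
      = (μ k * (α + k + 1 + m * b) - (α + k + m * b) * μ (m + k)) • v (m + k + 1) := by
  have h := lie_lie_apply_of_shift hL hI₁ m k
  rwa [s.lie_lie_L_I_apply (hCLI k), Int.cast_one, one_smul, Int.cast_add, Int.cast_one,
    ← add_assoc] at h

theorem coeff_relation_I_zero {v : ℤ → V} (hv : ∀ k : ℤ, v k ≠ 0) {α b c : ℂ} {μ : ℤ → ℂ}
    (hL : ∀ m k : ℤ, ⁅s.L m, v k⁆ = (α + k + m * b) • v (m + k))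
    (hCLI : ∀ k : ℤ, ⁅s.CLI, v k⁆ = 0) (hI₁ : ∀ k : ℤ, ⁅s.I 1, v k⁆ = μ k • v (k + 1))
    (hI₀ : ∀ k : ℤ, ⁅s.I 0, v k⁆ = c • v k) (k : ℤ) :
    μ k * (α + k + 1 - b) - (α + k - b) * μ (k - 1) = c := by
  have h := s.lie_I_add_one_apply hL hCLI hI₁ (-1) k
  rw [neg_add_cancel, hI₀, neg_add_cancel_comm, neg_add_eq_sub] at h
  have := smul_left_injective ℂ (hv k) h
  push_cast at this
  linear_combination -this

theorem coeff_relation_I_two {v : ℤ → V} (hv : ∀ k : ℤ, v k ≠ 0) {α b c : ℂ} {μ : ℤ → ℂ}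
    (hL : ∀ m k : ℤ, ⁅s.L m, v k⁆ = (α + k + m * b) • v (m + k))
    (hCLI : ∀ k : ℤ, ⁅s.CLI, v k⁆ = 0) (hI₁ : ∀ k : ℤ, ⁅s.I 1, v k⁆ = μ k • v (k + 1))
    (hI₀ : ∀ k : ℤ, ⁅s.I 0, v k⁆ = c • v k) (k : ℤ) :
    (μ k * (α + k + 1 + b) - (α + k + b) * μ (k + 1)) * (α + k + 2 - 2 * b)
      - (α + k - 2 * b) * (μ (k - 2) * (α + k - 1 + b) - (α + k - 2 + b) * μ (k - 1)) = 2 * c := by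
  have hI₂ (j : ℤ) : ⁅s.I 2, v j⁆
      = (μ j * (α + j + 1 + b) - (α + j + b) * μ (j + 1)) • v (j + 2) := by
    convert s.lie_I_add_one_apply hL hCLI hI₁ 1 j using 2 <;> push_cast <;> ring_nf
  have h := lie_lie_apply_of_shift hL hI₂ (-2) k
  rw [s.lie_lie_L_I_apply (hCLI k), neg_add_cancel, hI₀, neg_add_cancel_comm, neg_add_eq_sub,
    smul_smul] at h
  have := smul_left_injective ℂ (hv k) h
  rw [show k - 2 + 1 = k - 1 by ring] at this
  push_cast at this
  linear_combination -this

end THV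

end LieModule

theorem claim_two_general (𝔏 : Type*) [LieRing 𝔏] [LieAlgebra ℂ 𝔏] (s : THV 𝔏)
    (V : Type*) [AddCommGroup V] [Module ℂ V] [LieRingModule 𝔏 V] [LieModule ℂ 𝔏 V]
    (a : ℝ) (b c : ℂ) (hb : b.re = 1 / 2)
    (v : Module.Basis ℤ ℂ V) (μ : ℤ → ℂ)
    (hCLI : ∀ k : ℤ, ⁅s.CLI, v k⁆ = 0)
    (hL : ∀ m k : ℤ, ⁅s.L m, v k⁆ = ((a : ℂ) + (k : ℂ) + (m : ℂ) * b) • v (m + k))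
    (hI0 : ∀ k : ℤ, ⁅s.I 0, v k⁆ = c • v k)
    (hI1 : ∀ k : ℤ, ⁅s.I 1, v k⁆ = μ k • v (k + 1)) :
    (∀ k : ℤ, μ k = c) ∧ (∀ m k : ℤ, ⁅s.I m, v k⁆ = c • v (m + k)) := by
  have hb₀ : b ≠ 0 := by rintro rfl; norm_num at hb
  have hb₁ : b ≠ 1 := by rintro rfl; norm_num at hb
  have hμ : ∀ k, μ k = c := eq_of_coeff_relations hb₀ hb₁
    (s.coeff_relation_I_zero v.ne_zero hL hCLI hI1 hI0)
    (s.coeff_relation_I_two v.ne_zero hL hCLI hI1 hI0)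
  refine ⟨hμ, fun m k => ?_⟩
  have h := s.lie_I_add_one_apply hL hCLI hI1 (m - 1) k
  rw [sub_add_cancel, hμ, hμ, show m - 1 + k + 1 = m + k by ring] at h
  rw [h]
  congr 1
  ring

/-- Claim 2 in the proof of Theorem 3.4: if `V` has a basis `{v_k}` with
`C_L, C_I, C_LI` acting as zero, `L_m v_k = (a + k + mb) v_{m+k}`, `I_0 v_k = c v_k`
and `I_1 v_k = μ_k v_{k+1}`, where `0 ≤ a < 1` and `Re b = 1/2`, then `μ_k = c`
for all `k` and consequently `I_m v_k = c v_{m+k}` for all `m, k`. -/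
theorem claim_two (𝔏 : Type*) [LieRing 𝔏] [LieAlgebra ℂ 𝔏] (s : THV 𝔏)
    (V : Type*) [AddCommGroup V] [Module ℂ V] [LieRingModule 𝔏 V] [LieModule ℂ 𝔏 V]
    (a : ℝ) (ha0 : 0 ≤ a) (ha1 : a < 1) (b c : ℂ) (hb : b.re = 1 / 2)
    (v : Module.Basis ℤ ℂ V) (μ : ℤ → ℂ)
    (hCL : ∀ k : ℤ, ⁅s.CL, v k⁆ = 0)
    (hCI : ∀ k : ℤ, ⁅s.CI, v k⁆ = 0)
    (hCLI : ∀ k : ℤ, ⁅s.CLI, v k⁆ = 0)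
    (hL : ∀ m k : ℤ, ⁅s.L m, v k⁆ = ((a : ℂ) + (k : ℂ) + (m : ℂ) * b) • v (m + k))
    (hI0 : ∀ k : ℤ, ⁅s.I 0, v k⁆ = c • v k)
    (hI1 : ∀ k : ℤ, ⁅s.I 1, v k⁆ = μ k • v (k + 1)) :
    (∀ k : ℤ, μ k = c) ∧ (∀ m k : ℤ, ⁅s.I m, v k⁆ = c • v (m + k)) :=
  claim_two_general 𝔏 s V a b c hb v μ hCLI hL hI0 hI1
end

section
/- Any conjugate-linear anti-involution of the Virasoro algebra Vir is one of the following two types: (i) θ⁺_α with θ⁺_α(L_n) = αⁿL_{−n} and θ⁺_α(C_L) = C_L, for some nonzero real number α; or (ii) θ⁻_α with θ⁻_α(L_n) = −αⁿL_n and θ⁻_α(C_L) = −C_L, for some complex number α of modulus one. -/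
/-- Index type for the standard basis of the Virasoro algebra. -/
inductive VirIx : Type
  | l : ℤ → VirIx
  | c : VirIx

/-- A complex Lie algebra `𝔤` equipped with the structure of the Virasoro algebra:
a basis `{L_n, C_L}` with the defining Lie brackets. -/
structure VirS (𝔤 : Type*) [LieRing 𝔤] [LieAlgebra ℂ 𝔤] where
  b : Module.Basis VirIx ℂ 𝔤
  bracket_LL : ∀ m n : ℤ, ⁅b (.l m), b (.l n)⁆ =
    ((n : ℂ) - (m : ℂ)) • b (.l (m + n)) +
      (if m + n = 0 then (((m : ℂ) ^ 3 - (m : ℂ)) / 12) • b .c else 0)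
  central_C : ∀ x : 𝔤, ⁅x, b .c⁆ = 0

namespace VirS

variable {𝔤 : Type*} [LieRing 𝔤] [LieAlgebra ℂ 𝔤]

/-- The element `L n`. -/
noncomputable def L (s : VirS 𝔤) (n : ℤ) : 𝔤 := s.b (.l n)
/-- The central element `C_L`. -/
noncomputable def C (s : VirS 𝔤) : 𝔤 := s.b .c

end VirS

namespace VirS

variable {𝔤 : Type*} [LieRing 𝔤] [LieAlgebra ℂ 𝔤]

/-- Images of the basis vectors under `θ⁺_α`. -/
noncomputable def thetaPlusB (s : VirS 𝔤) (α : ℝ) : VirIx → 𝔤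
  | .l n => ((α : ℂ) ^ n) • s.L (-n)
  | .c => s.C

/-- The map `θ⁺_α`, defined on basis elements by `θ⁺_α(L n) = αⁿ L₋ₙ`, `θ⁺_α(C_L) = C_L`,
and extended conjugate-linearly. -/
noncomputable def thetaPlus (s : VirS 𝔤) (α : ℝ) : 𝔤 → 𝔤 :=
  fun x => (s.b.repr x).sum fun ix c => (starRingEnd ℂ) c • s.thetaPlusB α ix

/-- `V` is a weight module over the Virasoro algebra: `C_L` acts by a scalar and `V` is the
direct sum of finite-dimensional eigenspaces of `L 0`. -/
def IsWeightModule (s : VirS 𝔤) (V : Type*) [AddCommGroup V] [Module ℂ V]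
    [LieRingModule 𝔤 V] [LieModule ℂ 𝔤 V] : Prop :=
  (∃ z : ℂ, ∀ v : V, ⁅s.C, v⁆ = z • v) ∧
  (∀ μ : ℂ, FiniteDimensional ℂ
    (Module.End.eigenspace (LieModule.toEnd ℂ 𝔤 V (s.L 0)) μ)) ∧
  (⨆ μ : ℂ, Module.End.eigenspace (LieModule.toEnd ℂ 𝔤 V (s.L 0)) μ) = ⊤

end VirS

/-!
Since `θ` reverses brackets, `ad (θ (L 0)) ∘ θ = -θ ∘ ad (L 0)`, so the images under `θ` of the
basis vectors are eigenvectors of `ad (θ (L 0))` spanning `𝔤`. If `θ (L 0)` had a nonzero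
coefficient at some `L k` with `k ≠ 0`, comparing extreme coefficients in `⁅θ (L 0), v⁆ = λ • v`
would show that no eigenvector `v` has a coefficient beyond the extreme such `k`; hence
`θ (L 0) ∈ span {L 0, C}`. Then `θ` maps `L 0`-weight spaces to weight spaces, scaling weights by
a sign `σ`, so `θ (L n) = μ n • L (σ n) + β n • C` and `θ C = γ • C`. Applying `θ` to the
brackets `⁅L m, L n⁆` gives `β = 0`, `γ = -σ` and `ν (m + n) = ν m * ν n` for `m ≠ n`, where
`ν = -σ μ`; the latter already forces `ν n = ν 1 ^ n`. Finally `θ² = id` on `L 1` says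
`conj α * α ^ σ = 1` for `α = ν 1`: `α` is real if `σ = -1` and unimodular if `σ = 1`.
-/

theorem eq_zpow_of_map_add_of_ne {G : Type*} [CommGroupWithZero G] {f : ℤ → G}
    (hf : ∀ m n, m ≠ n → f (m + n) = f m * f n) (h1 : f 1 ≠ 0) (n : ℤ) : f n = f 1 ^ n := by
  have h0 : f 0 = 1 := mul_right_cancel₀ h1 (by simpa using (hf 0 1 (by norm_num)).symm)
  have h3 : f 3 ≠ 0 := fun h => h1 (by simpa [h] using hf 3 (-2) (by norm_num))
  have h2 : f 2 = f 1 ^ 2 := by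
    have h5 := hf 2 3 (by norm_num)
    rw [show (2 : ℤ) + 3 = 1 + 4 by norm_num, hf 1 4 (by norm_num),
      show (4 : ℤ) = 1 + 3 by norm_num, hf 1 3 (by norm_num)] at h5
    exact mul_right_cancel₀ h3 (by rw [← h5, pow_two, mul_assoc])
  have hnat : ∀ k : ℕ, f k = f 1 ^ k := by
    intro k
    induction k with
    | zero => simpa using h0
    | succ k ih =>
      rcases eq_or_ne k 1 with rfl | hk
      · simpa using h2
      · rw [Nat.cast_succ, add_comm, hf 1 k (by exact_mod_cast hk.symm), ih, pow_succ']
  obtain ⟨k, rfl | rfl⟩ := Int.eq_nat_or_neg n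
  · rw [hnat, zpow_natCast]
  · rcases eq_or_ne k 0 with rfl | hk
    · simpa using h0
    · have hk' := hf (-k) k (by omega)
      rw [neg_add_cancel, h0, hnat] at hk'
      rw [zpow_neg, zpow_natCast, eq_inv_of_mul_eq_one_left hk'.symm]

namespace IsConjAntiInvol

variable {𝔤 : Type*} [LieRing 𝔤] [LieAlgebra ℂ 𝔤] {θ : 𝔤 → 𝔤}

theorem map_zero (hθ : IsConjAntiInvol 𝔤 θ) : θ 0 = 0 := by
  simpa using hθ.map_smul 0 0

theorem map_neg (hθ : IsConjAntiInvol 𝔤 θ) (x : 𝔤) : θ (-x) = -θ x := by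
  simpa using hθ.map_smul (-1) x

theorem map_intCast_smul (hθ : IsConjAntiInvol 𝔤 θ) (n : ℤ) (x : 𝔤) :
    θ ((n : ℂ) • x) = (n : ℂ) • θ x := by
  rw [hθ.map_smul, map_intCast]

theorem map_ne_zero (hθ : IsConjAntiInvol 𝔤 θ) {x : 𝔤} (hx : x ≠ 0) : θ x ≠ 0 := fun h =>
  hx (by rw [← hθ.invol x, h, hθ.map_zero])

theorem map_lie_eq_zero_of_forall (hθ : IsConjAntiInvol 𝔤 θ) {z : 𝔤}
    (hz : ∀ y : 𝔤, ⁅y, z⁆ = 0) (y : 𝔤) : ⁅θ z, y⁆ = 0 := by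
  rw [← hθ.invol y, ← hθ.map_bracket, hz, hθ.map_zero]

theorem exists_repr_map_basis_ne_zero (hθ : IsConjAntiInvol 𝔤 θ) {ι : Type*}
    (b : Module.Basis ι ℂ 𝔤) (j : ι) : ∃ i, b.repr (θ (b i)) j ≠ 0 := by
  by_contra! h
  have hzero : ∀ x ∈ Submodule.span ℂ (Set.range b), b.repr (θ x) j = 0 := by
    intro x hx
    induction hx using Submodule.span_induction with
    | mem x hx => obtain ⟨i, rfl⟩ := hx; exact h i
    | zero => simp [hθ.map_zero]
    | add x y _ _ hx hy => simp [hθ.map_add, hx, hy]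
    | smul c x _ hx => simp [hθ.map_smul, hx]
  simpa [hθ.invol] using hzero _ (b.mem_span (θ (b j)))

end IsConjAntiInvol

/-- The `ad (L 0)`-eigenvalue of a basis vector. -/
def VirIx.deg : VirIx → ℤ
  | .l n => n
  | .c => 0

/-- `k` is the last index of `f` in the direction of the sign of `ε`. -/
def IsTopIndex (f : VirIx →₀ ℂ) (ε k : ℤ) : Prop :=
  f (.l k) ≠ 0 ∧ ∀ m, ε * k < ε * m → f (.l m) = 0

theorem exists_isTopIndex (f : VirIx →₀ ℂ) {ε k : ℤ} (hk : f (.l k) ≠ 0) (hεk : 0 < ε * k) :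
    ∃ k₀, ε * k ≤ ε * k₀ ∧ IsTopIndex f ε k₀ := by
  obtain ⟨i, hi, hmax⟩ :=
    f.support.exists_max_image (fun i => ε * i.deg) ⟨.l k, Finsupp.mem_support_iff.mpr hk⟩
  have hk_le := hmax (.l k) (Finsupp.mem_support_iff.mpr hk)
  cases i with
  | c => simp only [VirIx.deg, mul_zero] at hk_le; omega
  | l k₀ =>
    refine ⟨k₀, hk_le, Finsupp.mem_support_iff.mp hi, fun m hm => ?_⟩
    by_contra h
    have := hmax (.l m) (Finsupp.mem_support_iff.mpr h)
    simp only [VirIx.deg] at this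
    omega

namespace VirS

variable {𝔤 : Type*} [LieRing 𝔤] [LieAlgebra ℂ 𝔤] (s : VirS 𝔤) {θ : 𝔤 → 𝔤}

@[simp] theorem b_l (n : ℤ) : s.b (.l n) = s.L n := rfl

@[simp] theorem b_c : s.b .c = s.C := rfl

@[simp] theorem repr_L (n : ℤ) : s.b.repr (s.L n) = Finsupp.single (.l n) 1 :=
  s.b.repr_self _

@[simp] theorem repr_C : s.b.repr s.C = Finsupp.single .c 1 :=
  s.b.repr_self _

theorem L_ne_zero (n : ℤ) : s.L n ≠ 0 := s.b.ne_zero _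

theorem lie_L_L (m n : ℤ) : ⁅s.L m, s.L n⁆ = ((n : ℂ) - m) • s.L (m + n) +
    (if m + n = 0 then (((m : ℂ) ^ 3 - m) / 12) • s.C else 0) :=
  s.bracket_LL m n

@[simp] theorem lie_C (x : 𝔤) : ⁅x, s.C⁆ = 0 := s.central_C x

@[simp] theorem C_lie (x : 𝔤) : ⁅s.C, x⁆ = 0 := by
  rw [← lie_skew, lie_C, neg_zero]

theorem lie_L_zero_b (i : VirIx) : ⁅s.L 0, s.b i⁆ = (i.deg : ℂ) • s.b i := by
  cases i with
  | l n => simp [lie_L_L, VirIx.deg]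
  | c => simp [VirIx.deg]

theorem lie_L_zero_L (n : ℤ) : ⁅s.L 0, s.L n⁆ = (n : ℂ) • s.L n := by
  simpa [VirIx.deg] using s.lie_L_zero_b (.l n)

theorem repr_lie_L_zero (x : 𝔤) (i : VirIx) :
    s.b.repr ⁅s.L 0, x⁆ i = i.deg * s.b.repr x i := by
  have key : (s.b.coord i).comp (LieModule.toEnd ℂ 𝔤 𝔤 (s.L 0)) =
      (i.deg : ℂ) • s.b.coord i := by
    classical
    refine s.b.ext fun j => ?_
    simp only [LinearMap.comp_apply, LieModule.toEnd_apply_apply, lie_L_zero_b,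
      LinearMap.smul_apply, Module.Basis.coord_apply, map_smul, Module.Basis.repr_self]
    by_cases h : j = i
    · subst h; simp
    · simp [h]
  simpa using LinearMap.congr_fun key x

theorem repr_lie_L_l (k n : ℤ) (y : 𝔤) :
    s.b.repr ⁅s.L k, y⁆ (.l n) = ((n : ℂ) - 2 * k) * s.b.repr y (.l (n - k)) := by
  have key : (s.b.coord (.l n)).comp (LieModule.toEnd ℂ 𝔤 𝔤 (s.L k)) =
      ((n : ℂ) - 2 * k) • s.b.coord (.l (n - k)) := by
    classical
    refine s.b.ext fun j => ?_
    cases j with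
    | l m =>
      simp only [LinearMap.comp_apply, LieModule.toEnd_apply_apply, b_l, lie_L_L,
        LinearMap.smul_apply, Module.Basis.coord_apply, map_add, map_smul, repr_L]
      by_cases h : k + m = n
      · subst h
        split_ifs <;> simp <;> ring
      · have h' : m ≠ n - k := by omega
        split_ifs <;> simp [h, h']
    | c => simp
  simpa using LinearMap.congr_fun key y

theorem repr_lie_l_eq_sum (x y : 𝔤) (n : ℤ) :
    s.b.repr ⁅x, y⁆ (.l n) = (s.b.repr x).sum fun i c => c * s.b.repr ⁅s.b i, y⁆ (.l n) := by
  conv_lhs => rw [← s.b.linearCombination_repr x, Finsupp.linearCombination_apply]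
  simp [Finsupp.sum, sum_lie, Finset.sum_apply']

theorem repr_eq_zero_of_lie_L_zero_eq_smul {x : 𝔤} {w : ℂ} (h : ⁅s.L 0, x⁆ = w • x)
    {i : VirIx} (hi : (i.deg : ℂ) ≠ w) : s.b.repr x i = 0 := by
  have hi' := congrArg (fun y => s.b.repr y i) h
  simp only [repr_lie_L_zero, map_smul, Finsupp.smul_apply, smul_eq_mul] at hi'
  have : ((i.deg : ℂ) - w) * s.b.repr x i = 0 := by linear_combination hi'
  exact (mul_eq_zero.mp this).resolve_left (sub_ne_zero.mpr hi)

theorem eq_smul_L_add_smul_C {x : 𝔤} {k : ℤ} (h : ∀ m, m ≠ k → s.b.repr x (.l m) = 0) :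
    x = s.b.repr x (.l k) • s.L k + s.b.repr x .c • s.C := by
  apply s.b.repr.injective
  ext (m | _)
  · by_cases hm : m = k
    · subst hm; simp
    · simp [h m hm, Ne.symm hm]
  · simp

theorem eq_smul_L_add_smul_C_of_lie_L_zero {x : 𝔤} {k : ℤ} (h : ⁅s.L 0, x⁆ = (k : ℂ) • x) :
    x = s.b.repr x (.l k) • s.L k + s.b.repr x .c • s.C :=
  s.eq_smul_L_add_smul_C fun m hm =>
    s.repr_eq_zero_of_lie_L_zero_eq_smul h (by simpa [VirIx.deg] using hm)

theorem eq_smul_C_of_forall_lie_eq_zero {z : 𝔤} (hz : ∀ y : 𝔤, ⁅z, y⁆ = 0) :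
    z = s.b.repr z .c • s.C := by
  have hz0 := s.eq_smul_L_add_smul_C_of_lie_L_zero (x := z) (k := 0)
    (by rw [← lie_skew, hz]; simp)
  have h1 := hz (s.L 1)
  rw [hz0, add_lie, smul_lie, smul_lie, C_lie, smul_zero, add_zero] at h1
  simp [lie_L_L, s.L_ne_zero] at h1
  rwa [h1, zero_smul, zero_add] at hz0

theorem repr_lie_add_of_isTopIndex {x y : 𝔤} {ε k₀ m₀ : ℤ} (hε : ε ≠ 0)
    (hx : IsTopIndex (s.b.repr x) ε k₀) (hy : IsTopIndex (s.b.repr y) ε m₀) :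
    s.b.repr ⁅x, y⁆ (.l (k₀ + m₀)) =
      s.b.repr x (.l k₀) * s.b.repr y (.l m₀) * ((m₀ : ℂ) - k₀) := by
  rw [repr_lie_l_eq_sum, Finsupp.sum_eq_single (.l k₀)]
  · rw [b_l, repr_lie_L_l, add_sub_cancel_left]
    push_cast
    ring
  · rintro (k | _) hk hne
    · have hkk₀ : k ≠ k₀ := fun h => hne (h ▸ rfl)
      have hlt : ε * k < ε * k₀ :=
        lt_of_le_of_ne (not_lt.mp fun h => hk (hx.2 k h)) fun h => hkk₀ (mul_left_cancel₀ hε h)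
      rw [b_l, repr_lie_L_l, hy.2 _ (by rw [mul_sub, mul_add]; linarith), mul_zero, mul_zero]
    · simp
  · simp

theorem repr_eq_zero_of_lie_eq_smul {T v : 𝔤} {w : ℂ} (hv : ⁅T, v⁆ = w • v) {ε k₀ : ℤ}
    (hk₀ : 0 < ε * k₀) (hT : IsTopIndex (s.b.repr T) ε k₀) {m : ℤ} (hm : ε * k₀ < ε * m) :
    s.b.repr v (.l m) = 0 := by
  by_contra hvm
  obtain ⟨m₀, hmm₀, hv₀⟩ := exists_isTopIndex (ε := ε) _ hvm (by linarith)
  have hε : ε ≠ 0 := by rintro rfl; simp at hk₀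
  have key := s.repr_lie_add_of_isTopIndex hε hT hv₀
  rw [hv, map_smul, Finsupp.smul_apply, hv₀.2 (k₀ + m₀) (by rw [mul_add]; linarith),
    smul_zero] at key
  have hne : (m₀ : ℂ) - k₀ ≠ 0 := by
    rw [sub_ne_zero, Ne, Int.cast_inj]
    rintro rfl
    linarith
  exact mul_ne_zero (mul_ne_zero hT.1 hv₀.1) hne key.symm

theorem lie_theta_L_zero_theta (hθ : IsConjAntiInvol 𝔤 θ) (x : 𝔤) :
    ⁅θ (s.L 0), θ x⁆ = -θ ⁅s.L 0, x⁆ := by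
  rw [← hθ.map_bracket, ← lie_skew, hθ.map_neg]

theorem repr_theta_L_zero_eq_zero (hθ : IsConjAntiInvol 𝔤 θ) {k : ℤ} (hk : k ≠ 0) :
    s.b.repr (θ (s.L 0)) (.l k) = 0 := by
  by_contra h
  have hkk := mul_self_pos.mpr hk
  obtain ⟨k₀, hkk₀, htop⟩ := exists_isTopIndex (ε := k) _ h hkk
  obtain ⟨i, hi⟩ := hθ.exists_repr_map_basis_ne_zero s.b (.l (k₀ + k))
  have heigen : ⁅θ (s.L 0), θ (s.b i)⁆ = (-(i.deg : ℂ)) • θ (s.b i) := by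
    rw [s.lie_theta_L_zero_theta hθ, lie_L_zero_b, hθ.map_intCast_smul, neg_smul]
  exact hi (s.repr_eq_zero_of_lie_eq_smul heigen (by linarith) htop (by rw [mul_add]; linarith))

theorem exists_lie_theta_L_zero_eq_smul (hθ : IsConjAntiInvol 𝔤 θ) :
    ∃ a : ℂ, ∀ x : 𝔤, ⁅θ (s.L 0), x⁆ = a • ⁅s.L 0, x⁆ := by
  obtain ⟨a, b, hab⟩ : ∃ a b : ℂ, θ (s.L 0) = a • s.L 0 + b • s.C :=
    ⟨_, _, s.eq_smul_L_add_smul_C fun _ hm => s.repr_theta_L_zero_eq_zero hθ hm⟩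
  exact ⟨a, fun x => by rw [hab, add_lie, smul_lie, smul_lie, C_lie, smul_zero, add_zero]⟩

theorem exists_sign_lie_L_zero_theta (hθ : IsConjAntiInvol 𝔤 θ) :
    ∃ σ : ℤ, σ * σ = 1 ∧ ∀ y, ⁅s.L 0, θ y⁆ = (σ : ℂ) • θ ⁅s.L 0, y⁆ := by
  obtain ⟨a, ha⟩ := s.exists_lie_theta_L_zero_eq_smul hθ
  have hweight : ∀ y : 𝔤, a • ⁅s.L 0, θ y⁆ = -θ ⁅s.L 0, y⁆ := fun y => by
    rw [← ha, lie_theta_L_zero_theta s hθ]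
  obtain ⟨i, hi⟩ : ∃ i, s.b.repr (θ (s.L 1)) i ≠ 0 := by
    by_contra! h
    exact hθ.map_ne_zero (s.L_ne_zero 1) (s.b.repr.injective (Finsupp.ext fun i => by simp [h]))
  have hai : a * i.deg = -1 := by
    have := congrArg (fun y => s.b.repr y i) (hweight (s.L 1))
    simp only [lie_L_zero_L, Int.cast_one, one_smul, map_smul, map_neg, repr_lie_L_zero,
      Finsupp.smul_apply, Finsupp.neg_apply, smul_eq_mul] at this
    exact mul_right_cancel₀ hi (by linear_combination this)
  have hσ : ∀ y, ⁅s.L 0, θ y⁆ = (i.deg : ℂ) • θ ⁅s.L 0, y⁆ := fun y => by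
    calc ⁅s.L 0, θ y⁆ = (-(a * i.deg)) • ⁅s.L 0, θ y⁆ := by rw [hai, neg_neg, one_smul]
      _ = (i.deg : ℂ) • -(a • ⁅s.L 0, θ y⁆) := by rw [smul_neg, smul_smul, neg_smul, mul_comm]
      _ = _ := by rw [hweight, neg_neg]
  refine ⟨i.deg, ?_, hσ⟩
  have h2 := hσ (θ (s.L 1))
  rw [hθ.invol, hσ, hθ.map_intCast_smul, hθ.invol, lie_L_zero_L, Int.cast_one, one_smul,
    smul_smul] at h2
  exact_mod_cast smul_left_injective ℂ (s.L_ne_zero 1) (h2.symm.trans (one_smul ℂ _).symm)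

theorem theta_L_eq (hθ : IsConjAntiInvol 𝔤 θ) {σ : ℤ}
    (hσ : ∀ y, ⁅s.L 0, θ y⁆ = (σ : ℂ) • θ ⁅s.L 0, y⁆) (n : ℤ) :
    θ (s.L n) = s.b.repr (θ (s.L n)) (.l (σ * n)) • s.L (σ * n) +
      s.b.repr (θ (s.L n)) .c • s.C := by
  refine s.eq_smul_L_add_smul_C_of_lie_L_zero ?_
  rw [hσ, lie_L_zero_L, hθ.map_intCast_smul, smul_smul, Int.cast_mul]

theorem theta_C_eq (hθ : IsConjAntiInvol 𝔤 θ) : θ s.C = s.b.repr (θ s.C) .c • s.C :=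
  s.eq_smul_C_of_forall_lie_eq_zero (hθ.map_lie_eq_zero_of_forall s.lie_C)

theorem theta_lie_L_L {σ : ℤ} {μ β : ℤ → ℂ} {γ : ℂ} (hθ : IsConjAntiInvol 𝔤 θ)
    (hL : ∀ n, θ (s.L n) = μ n • s.L (σ * n) + β n • s.C) (hC : θ s.C = γ • s.C) (m n : ℤ) :
    ((n : ℂ) - m) • (μ (m + n) • s.L (σ * (m + n)) + β (m + n) • s.C) +
      (if m + n = 0 then ((((m : ℂ) ^ 3 - m) / 12) * γ) • s.C else 0) =
    (μ n * μ m) • ⁅s.L (σ * n), s.L (σ * m)⁆ := by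
  have hrhs : ⁅θ (s.L n), θ (s.L m)⁆ = (μ n * μ m) • ⁅s.L (σ * n), s.L (σ * m)⁆ := by
    simp [hL, smul_smul, mul_comm]
  rw [← hrhs, ← hθ.map_bracket, lie_L_L, hθ.map_add, hθ.map_smul, hL]
  congr 1
  · simp
  · split_ifs <;> simp [hθ.map_zero, hθ.map_smul, hC, smul_smul, map_ofNat]

theorem repr_c_theta_lie_L_L {σ : ℤ} {μ β : ℤ → ℂ} {γ : ℂ} (hθ : IsConjAntiInvol 𝔤 θ)
    (hL : ∀ n, θ (s.L n) = μ n • s.L (σ * n) + β n • s.C) (hC : θ s.C = γ • s.C) (m n : ℤ) :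
    ((n : ℂ) - m) * β (m + n) + (if m + n = 0 then ((m : ℂ) ^ 3 - m) / 12 * γ else 0) =
      μ n * μ m * (if σ * n + σ * m = 0 then (((σ : ℂ) * n) ^ 3 - σ * n) / 12 else 0) := by
  have h := congrArg (fun x => s.b.repr x .c) (s.theta_lie_L_L hθ hL hC m n)
  rw [lie_L_L] at h
  split_ifs at h ⊢ <;> simp [-mul_eq_zero] at h <;> linear_combination h

theorem C_coeff_theta_L_eq_zero {σ : ℤ} {μ β : ℤ → ℂ} {γ : ℂ} (hθ : IsConjAntiInvol 𝔤 θ)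
    (hσ : σ * σ = 1) (hL : ∀ n, θ (s.L n) = μ n • s.L (σ * n) + β n • s.C)
    (hC : θ s.C = γ • s.C) (k : ℤ) : β k = 0 := by
  have hσ' : (σ : ℂ) * σ = 1 := by exact_mod_cast hσ
  rcases eq_or_ne k 0 with rfl | hk
  · have h := s.repr_c_theta_lie_L_L hθ hL hC 1 (-1)
    simp at h
    linear_combination (-1 / 2 : ℂ) * h + (μ (-1) * μ 1 * σ / 24) * hσ'
  · have h := s.repr_c_theta_lie_L_L hθ hL hC 0 k
    have hσk : σ * k + σ * 0 ≠ 0 := by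
      rw [mul_zero, add_zero]
      exact mul_ne_zero (by rintro rfl; simp at hσ) hk
    rw [if_neg (by simpa using hk), if_neg hσk] at h
    simpa [hk] using h

theorem C_coeff_theta_C_eq {σ : ℤ} {μ β : ℤ → ℂ} {γ : ℂ} (hθ : IsConjAntiInvol 𝔤 θ)
    (hσ : σ * σ = 1) (hL : ∀ n, θ (s.L n) = μ n • s.L (σ * n) + β n • s.C)
    (hC : θ s.C = γ • s.C) : γ = -σ * (μ (-2) * μ 2) := by
  have hσ' : (σ : ℂ) * σ = 1 := by exact_mod_cast hσ
  have h := s.repr_c_theta_lie_L_L hθ hL hC 2 (-2)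
  simp [s.C_coeff_theta_L_eq_zero hθ hσ hL hC] at h
  linear_combination 2 * h - (4 / 3 : ℂ) * μ (-2) * μ 2 * σ * hσ'

theorem L_coeff_theta_L_add {σ : ℤ} {μ β : ℤ → ℂ} {γ : ℂ} (hθ : IsConjAntiInvol 𝔤 θ)
    (hL : ∀ n, θ (s.L n) = μ n • s.L (σ * n) + β n • s.C) (hC : θ s.C = γ • s.C)
    {m n : ℤ} (hmn : m ≠ n) : -σ * μ (m + n) = (-σ * μ m) * (-σ * μ n) := by
  have h := congrArg (fun x => s.b.repr x (.l (σ * (m + n)))) (s.theta_lie_L_L hθ hL hC m n)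
  rw [lie_L_L, show σ * n + σ * m = σ * (m + n) by ring] at h
  have hnm : (n : ℂ) - m ≠ 0 := sub_ne_zero.mpr (by exact_mod_cast hmn.symm)
  refine mul_left_cancel₀ hnm ?_
  split_ifs at h <;> simp at h <;> linear_combination (-σ : ℂ) * h

theorem exists_sign_theta_eq_zpow (hθ : IsConjAntiInvol 𝔤 θ) :
    ∃ σ : ℤ, σ * σ = 1 ∧ ∃ α : ℂ,
      (∀ n, θ (s.L n) = (-σ * α ^ n) • s.L (σ * n)) ∧ θ s.C = (-σ : ℂ) • s.C := by
  obtain ⟨σ, hσ, hweight⟩ := s.exists_sign_lie_L_zero_theta hθ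
  have hσ' : (σ : ℂ) * σ = 1 := by exact_mod_cast hσ
  obtain ⟨μ, β, hL⟩ : ∃ μ β : ℤ → ℂ, ∀ n, θ (s.L n) = μ n • s.L (σ * n) + β n • s.C :=
    ⟨_, _, s.theta_L_eq hθ hweight⟩
  obtain ⟨γ, hC⟩ : ∃ γ : ℂ, θ s.C = γ • s.C := ⟨_, s.theta_C_eq hθ⟩
  have hβ := s.C_coeff_theta_L_eq_zero hθ hσ hL hC
  have hμ : ∀ n, μ n ≠ 0 := fun n h => hθ.map_ne_zero (s.L_ne_zero n) (by simp [hL, hβ, h])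
  have hzpow := eq_zpow_of_map_add_of_ne (f := fun n => -σ * μ n)
    (fun _ _ => s.L_coeff_theta_L_add hθ hL hC)
    (mul_ne_zero (neg_ne_zero.mpr (by rintro h; simp [h] at hσ')) (hμ 1))
  have hγ : γ = -σ := by
    have h := s.L_coeff_theta_L_add hθ hL hC (m := -2) (n := 2) (by norm_num)
    rw [neg_add_cancel, hzpow 0, zpow_zero] at h
    rw [s.C_coeff_theta_C_eq hθ hσ hL hC]
    linear_combination (σ : ℂ) * h + σ * μ (-2) * μ 2 * hσ'
  refine ⟨σ, hσ, -σ * μ 1, fun n => ?_, by rw [hC, hγ]⟩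
  rw [hL, hβ, zero_smul, add_zero, ← hzpow n]
  congr 1
  linear_combination (-μ n) * hσ'

theorem conj_mul_zpow_eq_one (hθ : IsConjAntiInvol 𝔤 θ) {σ : ℤ} (hσ : σ * σ = 1) {α : ℂ}
    (hL : ∀ n, θ (s.L n) = (-σ * α ^ n) • s.L (σ * n)) : starRingEnd ℂ α * α ^ σ = 1 := by
  have h := hθ.invol (s.L 1)
  rw [hL, hθ.map_smul, hL, smul_smul, mul_one, hσ] at h
  have hσ' : (σ : ℂ) * σ = 1 := by exact_mod_cast hσ
  have := smul_left_injective ℂ (s.L_ne_zero 1) (h.trans (one_smul ℂ _).symm)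
  simp only [map_mul, map_neg, map_intCast, zpow_one] at this
  linear_combination this - starRingEnd ℂ α * α ^ σ * hσ'

end VirS

/-- Lemma 2.3 (Chari-Pressley): any conjugate-linear anti-involution of the Virasoro
algebra is either `θ⁺_α` (`θ(L n) = αⁿ L₋ₙ`, `θ(C_L) = C_L`) for some nonzero real `α`,
or `θ⁻_α` (`θ(L n) = -αⁿ Lₙ`, `θ(C_L) = -C_L`) for some `α ∈ S¹`. -/
theorem vir_conjAntiInvol_classification (𝔤 : Type*) [LieRing 𝔤] [LieAlgebra ℂ 𝔤]
    (s : VirS 𝔤) (θ : 𝔤 → 𝔤) (hθ : IsConjAntiInvol 𝔤 θ) :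
    (∃ α : ℝ, α ≠ 0 ∧ (∀ n : ℤ, θ (s.L n) = ((α : ℂ) ^ n) • s.L (-n)) ∧ θ s.C = s.C) ∨
    (∃ α : ℂ, ‖α‖ = 1 ∧ (∀ n : ℤ, θ (s.L n) = -(α ^ n) • s.L n) ∧
      θ s.C = -s.C) := by
  obtain ⟨σ, hσ, α, hL, hC⟩ := s.exists_sign_theta_eq_zpow hθ
  have hα := s.conj_mul_zpow_eq_one hθ hσ hL
  rcases Int.eq_one_or_neg_one_of_mul_eq_one hσ with rfl | rfl
  · refine Or.inr ⟨α, ?_, fun n => by simpa using hL n, by simpa using hC⟩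
    rw [zpow_one, mul_comm, Complex.mul_conj'] at hα
    exact (pow_eq_one_iff_of_nonneg (norm_nonneg α) two_ne_zero).mp (by exact_mod_cast hα)
  · have hα0 : α ≠ 0 := by rintro rfl; simp at hα
    rw [zpow_neg_one, ← div_eq_mul_inv, div_eq_one_iff_eq hα0] at hα
    obtain ⟨r, rfl⟩ : ∃ r : ℝ, (r : ℂ) = α := ⟨α.re, Complex.conj_eq_iff_re.mp hα⟩
    exact Or.inl ⟨r, by simpa using hα0, fun n => by simpa using hL n, by simpa using hC⟩
end
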